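/- arXiv:1104.2883 — 4 statements merged into one kernel-verified Lean document; each statement's English description precedes it below -/
import Mathlib

section
/- Let n ∈ ℕ, n ≥ 1, let R : ℝ → ℝ be a smooth positive function, let l ∈ ℝ with l ≠ 2, set μ = 2/(2 − l), and let α ≠ 0, β ∈ ℝ, c₁ ∈ ℝ. Suppose v : ℝ^n × ℝ → ℝ is a smooth solution of the linear equation ∂²_t v + n(R'(t)/R(t))∂_t v − R(t)^{-2}Δv = 0 such that (α/μ)v(x,t) + β > 0 for all (x,t). Then the pair u¹(x,t) = c₁, u²(x,t) = ((α/μ)v(x,t) + β)^μ satisfies the wave-map system in the spatially flat Robertson–Walker spacetime with target ℍ²_l. -/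
open MeasureTheory

noncomputable section

/-- The `i`-th partial derivative of `f : ℝⁿ → ℝ` at `x`. -/
def pd {n : ℕ} (f : EuclideanSpace ℝ (Fin n) → ℝ) (x : EuclideanSpace ℝ (Fin n))
    (i : Fin n) : ℝ :=
  fderiv ℝ f x (EuclideanSpace.single i 1)

/-- The Laplacian of `f : ℝⁿ → ℝ` at `x`. -/
def lapl {n : ℕ} (f : EuclideanSpace ℝ (Fin n) → ℝ) (x : EuclideanSpace ℝ (Fin n)) : ℝ :=
  ∑ i, pd (fun y => pd f y i) x i

/-- The dot product `∇f · ∇g` at `x`. -/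
def gradDot {n : ℕ} (f g : EuclideanSpace ℝ (Fin n) → ℝ)
    (x : EuclideanSpace ℝ (Fin n)) : ℝ :=
  ∑ i, pd f x i * pd g x i

/-- The wave-map system, at the point `(x,t)`, in the spatially flat
Robertson–Walker spacetime `g = -dt² + R²(t)σ` with target the half-plane
`ℍ²_l` with metric `(u²)^{-l}((du¹)² + (du²)²)`. -/
def WaveMapEqAt (n : ℕ) (R : ℝ → ℝ) (l : ℝ)
    (u1 u2 : EuclideanSpace ℝ (Fin n) → ℝ → ℝ)
    (x : EuclideanSpace ℝ (Fin n)) (t : ℝ) : Prop :=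
  (iteratedDeriv 2 (u1 x) t + (n : ℝ) * (deriv R t / R t) * deriv (u1 x) t
      - ((R t) ^ 2)⁻¹ * lapl (fun y => u1 y t) x
      - (l / u2 x t) * (deriv (u1 x) t * deriv (u2 x) t)
      + ((R t) ^ 2)⁻¹ * (l / u2 x t) * gradDot (fun y => u1 y t) (fun y => u2 y t) x = 0)
  ∧
  (iteratedDeriv 2 (u2 x) t + (n : ℝ) * (deriv R t / R t) * deriv (u2 x) t
      - ((R t) ^ 2)⁻¹ * lapl (fun y => u2 y t) x
      + (l / (2 * u2 x t)) * ((deriv (u1 x) t) ^ 2 - (deriv (u2 x) t) ^ 2)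
      - ((R t) ^ 2)⁻¹ * (l / (2 * u2 x t)) *
          (gradDot (fun y => u1 y t) (fun y => u1 y t) x
            - gradDot (fun y => u2 y t) (fun y => u2 y t) x) = 0)

/-- The wave-map system on all of `ℝⁿ × ℝ`. -/
def WaveMapSystem (n : ℕ) (R : ℝ → ℝ) (l : ℝ)
    (u1 u2 : EuclideanSpace ℝ (Fin n) → ℝ → ℝ) : Prop :=
  ∀ (x : EuclideanSpace ℝ (Fin n)) (t : ℝ), WaveMapEqAt n R l u1 u2 x t

lemma pd_eq {n : ℕ} {f : EuclideanSpace ℝ (Fin n) → ℝ} {x : EuclideanSpace ℝ (Fin n)}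
    {L : EuclideanSpace ℝ (Fin n) →L[ℝ] ℝ} (h : HasFDerivAt f L x) (i : Fin n) :
    pd f x i = L (EuclideanSpace.single i 1) := by
  rw [pd, h.fderiv]

/-- If `v` is a smooth solution of the linear equation
`∂²_t v + n(R'/R)∂_t v − R^{-2}Δv = 0` with `(α/μ)v + β > 0`, then
`u¹ = c₁`, `u² = ((α/μ)v + β)^μ` (with `μ = 2/(2−l)`, `l ≠ 2`) is a wave map
into `ℍ²_l`. -/
theorem stmt_4 (n : ℕ) (hn : 1 ≤ n) (R : ℝ → ℝ)
    (hR : ContDiff ℝ (⊤ : ℕ∞) R) (hRpos : ∀ t, 0 < R t)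
    (l : ℝ) (hl : l ≠ 2) (μ : ℝ) (hμ : μ = 2 / (2 - l))
    (α β c₁ : ℝ) (hα : α ≠ 0)
    (v : EuclideanSpace ℝ (Fin n) → ℝ → ℝ)
    (hv : ContDiff ℝ (⊤ : ℕ∞) (fun p : EuclideanSpace ℝ (Fin n) × ℝ => v p.1 p.2))
    (hlin : ∀ (x : EuclideanSpace ℝ (Fin n)) (t : ℝ),
      iteratedDeriv 2 (v x) t + (n : ℝ) * (deriv R t / R t) * deriv (v x) t
        - ((R t) ^ 2)⁻¹ * lapl (fun y => v y t) x = 0)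
    (hpos : ∀ (x : EuclideanSpace ℝ (Fin n)) (t : ℝ), 0 < α / μ * v x t + β) :
    WaveMapSystem n R l (fun _ _ => c₁) (fun x t => (α / μ * v x t + β) ^ μ) := by
  have h2l : (2 : ℝ) - l ≠ 0 := sub_ne_zero.mpr (Ne.symm hl)
  have hμ0 : μ ≠ 0 := by rw [hμ]; exact div_ne_zero two_ne_zero h2l
  have hkey : μ * (μ - 1) = l / 2 * μ ^ 2 := by
    have hμ2 : μ * (2 - l) = 2 := by rw [hμ]; field_simp
    linear_combination μ / 2 * hμ2
  intro x t
  -- smoothness facts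
  have hts : ContDiff ℝ (⊤ : ℕ∞) (v x) := hv.comp (contDiff_const.prodMk contDiff_id)
  have hfs : ContDiff ℝ (⊤ : ℕ∞) (fun y : EuclideanSpace ℝ (Fin n) => v y t) :=
    hv.comp (contDiff_id.prodMk contDiff_const)
  have hDv : Differentiable ℝ (v x) := hts.differentiable (by simp)
  have hDv' : Differentiable ℝ (deriv (v x)) :=
    ((contDiff_infty_iff_deriv.mp (hts.of_le (by simp))).2).differentiable
      (by simp)
  have hDf : Differentiable ℝ (fun y : EuclideanSpace ℝ (Fin n) => v y t) :=
    hfs.differentiable (by simp)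
  have hDg : ∀ i : Fin n, Differentiable ℝ
      (fun y : EuclideanSpace ℝ (Fin n) => pd (fun z => v z t) y i) := by
    intro i
    exact (((contDiff_infty_iff_fderiv.mp (hfs.of_le (by simp))).2).differentiable
      (by simp)).clm_apply (differentiable_const _)
  constructor
  · -- first equation: everything vanishes
    beta_reduce
    simp [pd, lapl, gradDot, iteratedDeriv_succ, iteratedDeriv_zero]
  · beta_reduce
    -- time derivatives
    have hw' : ∀ s : ℝ, HasDerivAt (fun s => α / μ * v x s + β)
        (α / μ * deriv (v x) s) s := fun s =>
      (((hDv s).hasDerivAt).const_mul (α / μ)).add_const β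
    have hu2t : ∀ s : ℝ, HasDerivAt (fun s => (α / μ * v x s + β) ^ μ)
        (α / μ * deriv (v x) s * μ * (α / μ * v x s + β) ^ (μ - 1)) s := fun s =>
      (hw' s).rpow_const (Or.inl (hpos x s).ne')
    have hd1 : deriv (fun s => (α / μ * v x s + β) ^ μ) =
        fun s => α / μ * deriv (v x) s * μ * (α / μ * v x s + β) ^ (μ - 1) :=
      funext fun s => (hu2t s).deriv
    have hd1t : deriv (fun s => (α / μ * v x s + β) ^ μ) t =
        α / μ * deriv (v x) t * μ * (α / μ * v x t + β) ^ (μ - 1) := (hu2t t).deriv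
    have h1 : HasDerivAt (fun s => α / μ * deriv (v x) s * μ)
        (α / μ * deriv (deriv (v x)) t * μ) t :=
      (((hDv' t).hasDerivAt).const_mul (α / μ)).mul_const μ
    have h2 : HasDerivAt (fun s => (α / μ * v x s + β) ^ (μ - 1))
        (α / μ * deriv (v x) t * (μ - 1) * (α / μ * v x t + β) ^ (μ - 1 - 1)) t :=
      (hw' t).rpow_const (Or.inl (hpos x t).ne')
    have h2nd : iteratedDeriv 2 (fun s => (α / μ * v x s + β) ^ μ) t =
        α / μ * deriv (deriv (v x)) t * μ * (α / μ * v x t + β) ^ (μ - 1)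
          + α / μ * deriv (v x) t * μ *
            (α / μ * deriv (v x) t * (μ - 1) * (α / μ * v x t + β) ^ (μ - 1 - 1)) := by
      rw [iteratedDeriv_succ, iteratedDeriv_one, hd1]
      exact (h1.mul h2).deriv
    -- spatial derivatives
    have hfd : ∀ y : EuclideanSpace ℝ (Fin n), HasFDerivAt (fun z => α / μ * v z t + β)
        ((α / μ) • fderiv ℝ (fun z => v z t) y) y := fun y =>
      (((hDf y).hasFDerivAt).const_mul (α / μ)).add_const β
    have hpd1 : ∀ (y : EuclideanSpace ℝ (Fin n)) (i : Fin n),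
        pd (fun z => (α / μ * v z t + β) ^ μ) y i =
          μ * (α / μ * v y t + β) ^ (μ - 1) * (α / μ * pd (fun z => v z t) y i) := by
      intro y i
      rw [pd_eq ((hfd y).rpow_const (Or.inl (hpos y t).ne')) i]
      simp [pd, smul_eq_mul]
    have hpd2 : ∀ i : Fin n,
        pd (fun y => pd (fun z => (α / μ * v z t + β) ^ μ) y i) x i =
          μ * (α / μ * v x t + β) ^ (μ - 1) *
              (α / μ * pd (fun y => pd (fun z => v z t) y i) x i)
            + (α / μ * pd (fun z => v z t) x i) *
              (μ * ((μ - 1) * (α / μ * v x t + β) ^ (μ - 1 - 1) *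
                (α / μ * pd (fun z => v z t) x i))) := by
      intro i
      have hfun : (fun y => pd (fun z => (α / μ * v z t + β) ^ μ) y i) =
          fun y => μ * (α / μ * v y t + β) ^ (μ - 1) *
            (α / μ * pd (fun z => v z t) y i) := funext fun y => hpd1 y i
      have hF : HasFDerivAt (fun y => μ * (α / μ * v y t + β) ^ (μ - 1))
          (μ • (((μ - 1) * (α / μ * v x t + β) ^ (μ - 1 - 1)) •
            ((α / μ) • fderiv ℝ (fun z => v z t) x))) x :=
        ((hfd x).rpow_const (Or.inl (hpos x t).ne')).const_mul μ
      have hG : HasFDerivAt (fun y => α / μ * pd (fun z => v z t) y i)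
          ((α / μ) • fderiv ℝ (fun y => pd (fun z => v z t) y i) x) x :=
        ((hDg i x).hasFDerivAt).const_mul (α / μ)
      rw [hfun, pd_eq (hF.fun_mul hG) i]
      simp [pd, smul_eq_mul]
    have hlapl2 : lapl (fun y => (α / μ * v y t + β) ^ μ) x =
        μ * (α / μ * v x t + β) ^ (μ - 1) * (α / μ) * lapl (fun y => v y t) x
          + μ * (μ - 1) * (α / μ) ^ 2 * (α / μ * v x t + β) ^ (μ - 1 - 1) *
            gradDot (fun y => v y t) (fun y => v y t) x := by
      unfold lapl gradDot
      rw [Finset.mul_sum, Finset.mul_sum, ← Finset.sum_add_distrib]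
      refine Finset.sum_congr rfl fun i _ => ?_
      rw [hpd2 i]; ring
    have hgd2 : gradDot (fun y => (α / μ * v y t + β) ^ μ)
        (fun y => (α / μ * v y t + β) ^ μ) x =
        (μ * (α / μ * v x t + β) ^ (μ - 1) * (α / μ)) ^ 2 *
          gradDot (fun y => v y t) (fun y => v y t) x := by
      unfold gradDot
      rw [Finset.mul_sum]
      refine Finset.sum_congr rfl fun i _ => ?_
      rw [hpd1 x i]; ring
    have hgd1 : gradDot (fun _ : EuclideanSpace ℝ (Fin n) => c₁)
        (fun _ : EuclideanSpace ℝ (Fin n) => c₁) x = 0 := by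
      simp [gradDot, pd]
    -- the linear equation
    have hB : iteratedDeriv 2 (v x) t = deriv (deriv (v x)) t := by
      rw [iteratedDeriv_succ, iteratedDeriv_one]
    have hlin' : deriv (deriv (v x)) t + (n : ℝ) * (deriv R t / R t) * deriv (v x) t
        - ((R t) ^ 2)⁻¹ * lapl (fun y => v y t) x = 0 := by
      rw [← hB]; exact hlin x t
    -- abbreviations
    have hw : (0 : ℝ) < α / μ * v x t + β := hpos x t
    have hw0 : (α / μ * v x t + β) ^ μ ≠ 0 := (Real.rpow_pos_of_pos hw μ).ne'
    have hrel : (α / μ * v x t + β) ^ (μ - 1) * (α / μ * v x t + β) ^ (μ - 1) =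
        (α / μ * v x t + β) ^ (μ - 1 - 1) * (α / μ * v x t + β) ^ μ := by
      rw [← Real.rpow_add hw, ← Real.rpow_add hw]
      congr 1; ring
    rw [h2nd, hd1t, hlapl2, hgd2, hgd1]
    simp only [deriv_const', iteratedDeriv_succ, iteratedDeriv_zero]
    set A := deriv (v x) t
    set B := deriv (deriv (v x)) t
    set Lf := lapl (fun y => v y t) x
    set Gf := gradDot (fun y => v y t) (fun y => v y t) x
    set w1 := (α / μ * v x t + β) ^ (μ - 1)
    set w2 := (α / μ * v x t + β) ^ (μ - 1 - 1)
    set w0 := (α / μ * v x t + β) ^ μ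
    set r := ((R t) ^ 2)⁻¹
    set k := (n : ℝ) * (deriv R t / R t)
    have hBval : B = r * Lf - k * A := by linarith [hlin']
    have hclear : l / (2 * w0) * (w1 * w1) = l / 2 * w2 := by
      rw [hrel]; field_simp
    rw [hBval]
    linear_combination (-(μ ^ 2 * (α / μ) ^ 2 * (A ^ 2 - r * Gf))) * hclear +
      ((α / μ) ^ 2 * (A ^ 2 - r * Gf) * w2) * hkey


end
end

section
/- Let n ∈ ℕ, n ≥ 1, let R : ℝ → ℝ be a smooth positive function, let C > 0 and d ∈ ℝ. Suppose φ : ℝ^n × ℝ → ℝ is a smooth solution of the linear equation ∂²_t φ + n(R'(t)/R(t))∂_t φ − R(t)^{-2}Δφ = 0. Then the pair u¹(x,t) = d + (1/C)(e^{2φ(x,t)} − 1)/(e^{2φ(x,t)} + 1), u²(x,t) = (2/C)e^{φ(x,t)}/(e^{2φ(x,t)} + 1) satisfies the wave-map system in the spatially flat Robertson–Walker spacetime with target ℍ²_l with l = 2. -/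
open MeasureTheory

noncomputable section

/-! ### Auxiliary functions and their derivatives -/

def Faux (C d a : ℝ) : ℝ := d + (1 / C) * ((Real.exp (2 * a) - 1) / (Real.exp (2 * a) + 1))
def Gaux (C a : ℝ) : ℝ := (2 / C) * (Real.exp a / (Real.exp (2 * a) + 1))
def F1 (C a : ℝ) : ℝ := (1/C) * (4 * Real.exp (2*a) / (Real.exp (2*a) + 1)^2)
def F2 (C a : ℝ) : ℝ := (1/C) * (8 * Real.exp (2*a) * (1 - Real.exp (2*a)) / (Real.exp (2*a) + 1)^3)
def G1 (C a : ℝ) : ℝ := (2/C) * (Real.exp a * (1 - Real.exp (2*a)) / (Real.exp (2*a) + 1)^2)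
def G2 (C a : ℝ) : ℝ := (2/C) * (Real.exp a * (Real.exp (2*a)^2 - 6 * Real.exp (2*a) + 1) / (Real.exp (2*a) + 1)^3)

lemma exp2_hasDeriv (a : ℝ) : HasDerivAt (fun x => Real.exp (2*x)) (Real.exp (2*a) * 2) a := by
  simpa using ((hasDerivAt_id a).const_mul (2:ℝ)).exp

lemma den_ne (a : ℝ) : Real.exp (2*a) + 1 ≠ 0 := by positivity

lemma hasDerivAt_Faux (C d a : ℝ) : HasDerivAt (Faux C d) (F1 C a) a := by
  have he := exp2_hasDeriv a
  have h := (((he.sub_const 1).div (he.add_const 1) (den_ne a)).const_mul (1/C)).const_add d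
  refine h.congr_deriv ?_
  unfold F1
  field_simp
  ring

lemma hasDerivAt_F1 (C a : ℝ) (hC : C ≠ 0) : HasDerivAt (F1 C) (F2 C a) a := by
  have he := exp2_hasDeriv a
  have hden := (he.add_const 1).pow 2
  have h := ((he.const_mul 4).div hden (pow_ne_zero 2 (den_ne a))).const_mul (1/C)
  refine h.congr_deriv ?_
  unfold F2
  simp only [Pi.pow_apply, Pi.sub_apply, Pi.mul_apply]
  field_simp [hC]
  ring

lemma hasDerivAt_Gaux (C a : ℝ) : HasDerivAt (Gaux C) (G1 C a) a := by
  have he := exp2_hasDeriv a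
  have h := ((Real.hasDerivAt_exp a).div (he.add_const 1) (den_ne a)).const_mul (2/C)
  refine h.congr_deriv ?_
  unfold G1
  field_simp
  ring

lemma hasDerivAt_G1 (C a : ℝ) (hC : C ≠ 0) : HasDerivAt (G1 C) (G2 C a) a := by
  have he := exp2_hasDeriv a
  have hnum := (Real.hasDerivAt_exp a).mul ((hasDerivAt_const a (1:ℝ)).sub he)
  have hden := (he.add_const 1).pow 2
  have h := (hnum.div hden (pow_ne_zero 2 (den_ne a))).const_mul (2/C)
  refine h.congr_deriv ?_
  unfold G2
  simp only [Pi.pow_apply, Pi.sub_apply, Pi.mul_apply]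
  field_simp [hC]
  ring

lemma Gaux_pos (C a : ℝ) (hC : 0 < C) : 0 < Gaux C a := by
  unfold Gaux
  have h1 : 0 < Real.exp a := Real.exp_pos a
  have h2 : 0 < Real.exp (2*a) + 1 := by positivity
  positivity

lemma key1 (C d a : ℝ) (hC : C ≠ 0) : F2 C a * Gaux C a = 2 * F1 C a * G1 C a := by
  unfold F2 Gaux F1 G1
  field_simp
  ring

lemma key2 (C a : ℝ) (hC : C ≠ 0) : G2 C a * Gaux C a + F1 C a ^ 2 - G1 C a ^ 2 = 0 := by
  have h2 : Real.exp (2*a) = Real.exp a ^ 2 := by rw [two_mul, Real.exp_add, sq]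
  unfold G2 Gaux F1 G1
  rw [h2]
  have : Real.exp a ^ 2 + 1 ≠ 0 := by positivity
  field_simp
  ring

/-! ### Chain rules -/

lemma pd_comp {n : ℕ} (h h1 : ℝ → ℝ) (hh : ∀ a, HasDerivAt h (h1 a) a)
    (χ : EuclideanSpace ℝ (Fin n) → ℝ) (hχ : Differentiable ℝ χ)
    (x : EuclideanSpace ℝ (Fin n)) (i : Fin n) :
    pd (fun y => h (χ y)) x i = h1 (χ x) * pd χ x i := by
  have hc : HasFDerivAt (fun y => h (χ y)) ((h1 (χ x)) • (fderiv ℝ χ x)) x := by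
    have := (hh (χ x)).hasFDerivAt.comp x (hχ x).hasFDerivAt
    refine this.congr_fderiv ?_
    ext v
    simp [mul_comm]
  unfold pd
  rw [hc.fderiv]
  simp [mul_comm]

lemma pd_mul {n : ℕ} (f g : EuclideanSpace ℝ (Fin n) → ℝ)
    (hf : Differentiable ℝ f) (hg : Differentiable ℝ g)
    (x : EuclideanSpace ℝ (Fin n)) (i : Fin n) :
    pd (fun y => f y * g y) x i = pd f x i * g x + f x * pd g x i := by
  unfold pd
  rw [fderiv_fun_mul (hf x) (hg x)]
  simp [mul_comm]
  ring

lemma lapl_comp {n : ℕ} (h h1 h2 : ℝ → ℝ)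
    (hh : ∀ a, HasDerivAt h (h1 a) a) (hh1 : ∀ a, HasDerivAt h1 (h2 a) a)
    (χ : EuclideanSpace ℝ (Fin n) → ℝ) (hχ : ContDiff ℝ (⊤:ℕ∞) χ)
    (x : EuclideanSpace ℝ (Fin n)) :
    lapl (fun y => h (χ y)) x
      = h2 (χ x) * gradDot χ χ x + h1 (χ x) * lapl χ x := by
  have hχd : Differentiable ℝ χ := hχ.differentiable (by simp)
  have hpdi : ∀ i : Fin n, Differentiable ℝ (fun y => pd χ y i) := by
    intro i
    have : ContDiff ℝ (⊤:ℕ∞) (fun y => fderiv ℝ χ y (EuclideanSpace.single i 1)) :=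
      (hχ.fderiv_right (by exact_mod_cast le_top)).clm_apply contDiff_const
    exact this.differentiable (by simp)
  have hh1c : Differentiable ℝ (fun y => h1 (χ y)) := by
    intro y
    exact ((hh1 (χ y)).differentiableAt).comp y (hχd y)
  unfold lapl gradDot
  rw [Finset.mul_sum, Finset.mul_sum, ← Finset.sum_add_distrib]
  apply Finset.sum_congr rfl
  intro i _
  have hinner : (fun y => pd (fun z => h (χ z)) y i) = fun y => h1 (χ y) * pd χ y i := by
    funext y
    exact pd_comp h h1 hh χ hχd y i
  rw [hinner, pd_mul (fun y => h1 (χ y)) (fun y => pd χ y i) hh1c (hpdi i) x i,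
    pd_comp h1 h2 hh1 χ hχd x i]
  ring

lemma gradDot_comp {n : ℕ} (h h1 k k1 : ℝ → ℝ)
    (hh : ∀ a, HasDerivAt h (h1 a) a) (hk : ∀ a, HasDerivAt k (k1 a) a)
    (χ : EuclideanSpace ℝ (Fin n) → ℝ) (hχ : Differentiable ℝ χ)
    (x : EuclideanSpace ℝ (Fin n)) :
    gradDot (fun y => h (χ y)) (fun y => k (χ y)) x
      = h1 (χ x) * k1 (χ x) * gradDot χ χ x := by
  unfold gradDot
  rw [Finset.mul_sum]
  apply Finset.sum_congr rfl
  intro i _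
  rw [pd_comp h h1 hh χ hχ x i, pd_comp k k1 hk χ hχ x i]
  ring

lemma deriv_comp_t (h h1 : ℝ → ℝ) (hh : ∀ a, HasDerivAt h (h1 a) a)
    (ψ : ℝ → ℝ) (hψ : Differentiable ℝ ψ) (t : ℝ) :
    deriv (fun s => h (ψ s)) t = h1 (ψ t) * deriv ψ t := by
  have hc : HasDerivAt (fun s => h (ψ s)) (h1 (ψ t) * deriv ψ t) t :=
    (hh (ψ t)).comp t (hψ t).hasDerivAt
  exact hc.deriv

lemma iteratedDeriv_two_comp_t (h h1 h2 : ℝ → ℝ)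
    (hh : ∀ a, HasDerivAt h (h1 a) a) (hh1 : ∀ a, HasDerivAt h1 (h2 a) a)
    (ψ : ℝ → ℝ) (hψ : ContDiff ℝ (⊤:ℕ∞) ψ) (t : ℝ) :
    iteratedDeriv 2 (fun s => h (ψ s)) t
      = h2 (ψ t) * (deriv ψ t)^2 + h1 (ψ t) * iteratedDeriv 2 (ψ) t := by
  have hψd : Differentiable ℝ ψ := hψ.differentiable (by simp)
  have hψ' : Differentiable ℝ (deriv ψ) :=
    (contDiff_infty_iff_deriv.mp hψ).2.differentiable (by simp)
  have itd2 : ∀ f : ℝ → ℝ, iteratedDeriv 2 f = deriv (deriv f) := by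
    intro f
    ext s
    rw [show (2:ℕ) = 1 + 1 from rfl, iteratedDeriv_succ, iteratedDeriv_one]
  rw [itd2, itd2]
  have hfun : deriv (fun s => h (ψ s)) = fun s => h1 (ψ s) * deriv ψ s :=
    funext (fun s => deriv_comp_t h h1 hh ψ hψd s)
  rw [hfun]
  have hprod : HasDerivAt (fun s => h1 (ψ s) * deriv ψ s)
      ((h2 (ψ t) * deriv ψ t) * deriv ψ t + h1 (ψ t) * deriv (deriv ψ) t) t := by
    exact ((hh1 (ψ t)).comp t (hψd t).hasDerivAt).mul (hψ' t).hasDerivAt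
  rw [hprod.deriv]
  ring

/-- If `φ` is a smooth solution of the linear equation
`∂²_t φ + n(R'/R)∂_t φ − R^{-2}Δφ = 0`, then
`u¹ = d + (1/C)(e^{2φ}−1)/(e^{2φ}+1)`, `u² = (2/C)e^{φ}/(e^{2φ}+1)` is a wave
map into the hyperbolic half-plane `ℍ²_l` with `l = 2`. -/
theorem stmt_6 (n : ℕ) (hn : 1 ≤ n) (R : ℝ → ℝ)
    (hR : ContDiff ℝ (⊤ : ℕ∞) R) (hRpos : ∀ t, 0 < R t)
    (C d : ℝ) (hC : 0 < C)
    (φ : EuclideanSpace ℝ (Fin n) → ℝ → ℝ)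
    (hφ : ContDiff ℝ (⊤ : ℕ∞) (fun p : EuclideanSpace ℝ (Fin n) × ℝ => φ p.1 p.2))
    (hlin : ∀ (x : EuclideanSpace ℝ (Fin n)) (t : ℝ),
      iteratedDeriv 2 (φ x) t + (n : ℝ) * (deriv R t / R t) * deriv (φ x) t
        - ((R t) ^ 2)⁻¹ * lapl (fun y => φ y t) x = 0) :
    WaveMapSystem n R 2
      (fun x t => d + (1 / C) * ((Real.exp (2 * φ x t) - 1) / (Real.exp (2 * φ x t) + 1)))
      (fun x t => (2 / C) * (Real.exp (φ x t) / (Real.exp (2 * φ x t) + 1))) := by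
  have hC' : C ≠ 0 := ne_of_gt hC
  have hφ' : ContDiff ℝ (⊤:ℕ∞) (fun p : EuclideanSpace ℝ (Fin n) × ℝ => φ p.1 p.2) :=
    hφ.of_le (by simp)
  intro x t
  show WaveMapEqAt n R 2 (fun x t => Faux C d (φ x t)) (fun x t => Gaux C (φ x t)) x t
  have hψ : ContDiff ℝ (⊤:ℕ∞) (φ x) := hφ'.comp (contDiff_const.prodMk contDiff_id)
  have hχ : ContDiff ℝ (⊤:ℕ∞) (fun y => φ y t) := hφ'.comp (contDiff_id.prodMk contDiff_const)
  have hχd : Differentiable ℝ (fun y => φ y t) := hχ.differentiable (by simp)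
  have hψd : Differentiable ℝ (φ x) := hψ.differentiable (by simp)
  have hFd := hasDerivAt_Faux C d
  have hF1d := fun a => hasDerivAt_F1 C a hC'
  have hGd := hasDerivAt_Gaux C
  have hG1d := fun a => hasDerivAt_G1 C a hC'
  have hGne : Gaux C (φ x t) ≠ 0 := ne_of_gt (Gaux_pos C (φ x t) hC)
  have e1F : deriv (fun s => Faux C d (φ x s)) t = F1 C (φ x t) * deriv (φ x) t :=
    deriv_comp_t _ _ hFd (φ x) hψd t
  have e1G : deriv (fun s => Gaux C (φ x s)) t = G1 C (φ x t) * deriv (φ x) t :=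
    deriv_comp_t _ _ hGd (φ x) hψd t
  have e2F : iteratedDeriv 2 (fun s => Faux C d (φ x s)) t
      = F2 C (φ x t) * (deriv (φ x) t)^2 + F1 C (φ x t) * iteratedDeriv 2 (φ x) t :=
    iteratedDeriv_two_comp_t _ _ _ hFd hF1d (φ x) hψ t
  have e2G : iteratedDeriv 2 (fun s => Gaux C (φ x s)) t
      = G2 C (φ x t) * (deriv (φ x) t)^2 + G1 C (φ x t) * iteratedDeriv 2 (φ x) t :=
    iteratedDeriv_two_comp_t _ _ _ hGd hG1d (φ x) hψ t
  have e3F : lapl (fun y => Faux C d (φ y t)) x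
      = F2 C (φ x t) * gradDot (fun y => φ y t) (fun y => φ y t) x
        + F1 C (φ x t) * lapl (fun y => φ y t) x :=
    lapl_comp _ _ _ hFd hF1d _ hχ x
  have e3G : lapl (fun y => Gaux C (φ y t)) x
      = G2 C (φ x t) * gradDot (fun y => φ y t) (fun y => φ y t) x
        + G1 C (φ x t) * lapl (fun y => φ y t) x :=
    lapl_comp _ _ _ hGd hG1d _ hχ x
  have e4FG : gradDot (fun y => Faux C d (φ y t)) (fun y => Gaux C (φ y t)) x
      = F1 C (φ x t) * G1 C (φ x t) * gradDot (fun y => φ y t) (fun y => φ y t) x :=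
    gradDot_comp _ _ _ _ hFd hGd _ hχd x
  have e4FF : gradDot (fun y => Faux C d (φ y t)) (fun y => Faux C d (φ y t)) x
      = F1 C (φ x t) * F1 C (φ x t) * gradDot (fun y => φ y t) (fun y => φ y t) x :=
    gradDot_comp _ _ _ _ hFd hFd _ hχd x
  have e4GG : gradDot (fun y => Gaux C (φ y t)) (fun y => Gaux C (φ y t)) x
      = G1 C (φ x t) * G1 C (φ x t) * gradDot (fun y => φ y t) (fun y => φ y t) x :=
    gradDot_comp _ _ _ _ hGd hGd _ hχd x
  have h0 := hlin x t
  have k1 : F2 C (φ x t) = 2 * F1 C (φ x t) * G1 C (φ x t) / Gaux C (φ x t) := by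
    rw [eq_div_iff hGne]; exact key1 C d (φ x t) hC'
  have k2 : G2 C (φ x t) = (G1 C (φ x t)^2 - F1 C (φ x t)^2) / Gaux C (φ x t) := by
    rw [eq_div_iff hGne]
    have := key2 C (φ x t) hC'
    linarith
  constructor
  · simp only
    rw [e2F, e1F, e1G, e3F, e4FG]
    linear_combination (F1 C (φ x t)) * h0
      + ((deriv (φ x) t)^2 - ((R t)^2)⁻¹ * gradDot (fun y => φ y t) (fun y => φ y t) x) * k1
  · simp only
    rw [e2G, e1G, e1F, e3G, e4FF, e4GG]
    linear_combination (G1 C (φ x t)) * h0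
      + ((deriv (φ x) t)^2 - ((R t)^2)⁻¹ * gradDot (fun y => φ y t) (fun y => φ y t) x) * k2

end
end

section
/- Let u¹, u² : ℝ² → ℝ be smooth functions for which there exists c > 0 with u²(x) ≥ c for all x ∈ ℝ², satisfying the elliptic system Δu¹ − (2/u²)∇u¹·∇u² = 0 and Δu² + (1/u²)(|∇u¹|² − |∇u²|²) = 0 on ℝ², and such that ∫_{ℝ²} (|∇u¹(x)|² + |∇u²(x)|²)·(u²(x))^{-2} dx < ∞. Then u¹ and u² are constant functions. -/
open MeasureTheory

noncomputable section

open Metric Filter Topology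

namespace Stmt10Aux


variable {n : ℕ}

lemma pd_eq_of_hasFDerivAt {f : EuclideanSpace ℝ (Fin n) → ℝ}
    {f' : EuclideanSpace ℝ (Fin n) →L[ℝ] ℝ} {x} (h : HasFDerivAt f f' x) (i : Fin n) :
    pd f x i = f' (EuclideanSpace.single i 1) := by
  rw [pd, h.fderiv]

lemma contDiff_pd {f : EuclideanSpace ℝ (Fin n) → ℝ} (hf : ContDiff ℝ (⊤ : ℕ∞) f) (i : Fin n) :
    ContDiff ℝ (⊤ : ℕ∞) (fun x => pd f x i) :=
  (hf.fderiv_right (m := (⊤ : ℕ∞)) (by exact_mod_cast le_rfl)).clm_apply contDiff_const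

lemma continuous_pd {f : EuclideanSpace ℝ (Fin n) → ℝ} (hf : ContDiff ℝ (⊤ : ℕ∞) f) (i : Fin n) :
    Continuous (fun x => pd f x i) := (contDiff_pd hf i).continuous

lemma continuous_gradDot {f g : EuclideanSpace ℝ (Fin n) → ℝ} (hf : ContDiff ℝ (⊤ : ℕ∞) f)
    (hg : ContDiff ℝ (⊤ : ℕ∞) g) : Continuous (fun x => gradDot f g x) := by
  simp only [gradDot]
  exact continuous_finset_sum _ fun i _ => (continuous_pd hf i).mul (continuous_pd hg i)

lemma continuous_lapl {f : EuclideanSpace ℝ (Fin n) → ℝ} (hf : ContDiff ℝ (⊤ : ℕ∞) f) :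
    Continuous (fun x => lapl f x) := by
  simp only [lapl]
  exact continuous_finset_sum _ fun i _ => continuous_pd (contDiff_pd hf i) i

lemma gradDot_self_nonneg (f : EuclideanSpace ℝ (Fin n) → ℝ) (x) : 0 ≤ gradDot f f x :=
  Finset.sum_nonneg fun i _ => mul_self_nonneg _

section w

variable {u2 : EuclideanSpace ℝ (Fin n) → ℝ}

lemma contDiff_w (hu2 : ContDiff ℝ (⊤ : ℕ∞) u2) (hc : ∀ x, u2 x ≠ 0) :
    ContDiff ℝ (⊤ : ℕ∞) (fun y => (u2 y)⁻¹) := hu2.inv hc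

lemma pd_w (hu2 : ContDiff ℝ (⊤ : ℕ∞) u2) (hc : ∀ x, u2 x ≠ 0) (x) (i : Fin n) :
    pd (fun y => (u2 y)⁻¹) x i = -((u2 x) ^ 2)⁻¹ * pd u2 x i := by
  have h2 : HasFDerivAt u2 (fderiv ℝ u2 x) x :=
    ((hu2.differentiable (by simp)) x).hasFDerivAt
  have hinv : HasDerivAt Inv.inv (-((u2 x) ^ 2)⁻¹) (u2 x) := hasDerivAt_inv (hc x)
  have h : HasFDerivAt (fun y => (u2 y)⁻¹) (-((u2 x) ^ 2)⁻¹ • fderiv ℝ u2 x) x :=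
    hinv.comp_hasFDerivAt x h2
  rw [pd_eq_of_hasFDerivAt h i]
  simp [pd]

lemma pd_pd_w (hu2 : ContDiff ℝ (⊤ : ℕ∞) u2) (hc : ∀ x, u2 x ≠ 0) (x) (i : Fin n) :
    pd (fun y => pd (fun z => (u2 z)⁻¹) y i) x i
      = -((u2 x) ^ 2)⁻¹ * pd (fun y => pd u2 y i) x i
        + (2 * u2 x / ((u2 x) ^ 2) ^ 2) * (pd u2 x i * pd u2 x i) := by
  have hfun : (fun y => pd (fun z => (u2 z)⁻¹) y i)
      = fun y => (-(((u2 y) ^ 2)⁻¹)) * pd u2 y i := by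
    funext y; rw [pd_w hu2 hc y i]
  rw [hfun]
  -- derivative of a := fun y => -((u2 y)^2)⁻¹
  have hsq : ∀ c : ℝ, c ≠ 0 → HasDerivAt (fun s : ℝ => -((s ^ 2)⁻¹)) (2 * c / (c ^ 2) ^ 2) c := by
    intro c hcne
    have h1 : HasDerivAt (fun s : ℝ => s ^ 2) (2 * c) c := by
      simpa using hasDerivAt_pow 2 c
    have h2 := (h1.inv (pow_ne_zero 2 hcne)).neg
    exact h2.congr_deriv (by ring)
  have h2 : HasFDerivAt u2 (fderiv ℝ u2 x) x := ((hu2.differentiable (by simp)) x).hasFDerivAt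
  have ha : HasFDerivAt (fun y => -(((u2 y) ^ 2)⁻¹))
      ((2 * u2 x / ((u2 x) ^ 2) ^ 2) • fderiv ℝ u2 x) x :=
    (hsq (u2 x) (hc x)).comp_hasFDerivAt x h2
  have hb : HasFDerivAt (fun y => pd u2 y i)
      (fderiv ℝ (fun y => pd u2 y i) x) x :=
    (((contDiff_pd hu2 i).differentiable (by simp)) x).hasFDerivAt
  have hmul := ha.mul hb
  rw [pd_eq_of_hasFDerivAt (f := fun y => -(((u2 y) ^ 2)⁻¹) * pd u2 y i) hmul i]
  simp only [ContinuousLinearMap.add_apply, ContinuousLinearMap.smul_apply,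
    ContinuousLinearMap.smulRight_apply, ContinuousLinearMap.coe_smul', Pi.smul_apply,
    smul_eq_mul]
  rw [pd, pd]
  ring

lemma lapl_w (hu2 : ContDiff ℝ (⊤ : ℕ∞) u2) (hc : ∀ x, u2 x ≠ 0) (x) :
    lapl (fun y => (u2 y)⁻¹) x
      = -((u2 x) ^ 2)⁻¹ * lapl u2 x + (2 * u2 x / ((u2 x) ^ 2) ^ 2) * gradDot u2 u2 x := by
  rw [lapl, gradDot, lapl, Finset.mul_sum, Finset.mul_sum, ← Finset.sum_add_distrib]
  exact Finset.sum_congr rfl fun i _ => by rw [pd_pd_w hu2 hc x i]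

end w


def psi (s : ℝ) : ℝ := Real.smoothTransition ((4 - s) / 3)

lemma psi_contDiff : ContDiff ℝ (⊤ : ℕ∞) psi := by
  have : psi = Real.smoothTransition ∘ (fun s : ℝ => (4 - s) / 3) := rfl
  rw [this]
  have h1 : ContDiff ℝ (⊤ : ℕ∞) (fun s : ℝ => (4 - s) / 3) := (contDiff_const.sub contDiff_id).div_const 3
  exact (Real.smoothTransition.contDiff (n := (⊤:ℕ∞))).comp h1


lemma psi_one {s : ℝ} (h : s ≤ 1) : psi s = 1 :=
  Real.smoothTransition.one_of_one_le (by rw [le_div_iff₀ (by norm_num)]; linarith)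

lemma psi_zero {s : ℝ} (h : 4 ≤ s) : psi s = 0 :=
  Real.smoothTransition.zero_of_nonpos (by rw [div_nonpos_iff]; right; constructor <;> linarith)

lemma psi_nonneg (s : ℝ) : 0 ≤ psi s := Real.smoothTransition.nonneg _

lemma psi_le_one (s : ℝ) : psi s ≤ 1 := Real.smoothTransition.le_one _

lemma deriv_psi_of_lt {s : ℝ} (h : s < 1) : deriv psi s = 0 := by
  have : psi =ᶠ[nhds s] fun _ => 1 := by
    filter_upwards [Iio_mem_nhds h] with t ht
    exact psi_one (le_of_lt ht)
  rw [this.deriv_eq, deriv_const]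

lemma deriv_psi_of_gt {s : ℝ} (h : 4 < s) : deriv psi s = 0 := by
  have : psi =ᶠ[nhds s] fun _ => 0 := by
    filter_upwards [Ioi_mem_nhds h] with t ht
    exact psi_zero (le_of_lt ht)
  rw [this.deriv_eq, deriv_const]

lemma exists_K : ∃ K : ℝ, 0 ≤ K ∧ ∀ s, |deriv psi s| ≤ K := by
  have hcont : Continuous (deriv psi) :=
    psi_contDiff.continuous_deriv (by exact_mod_cast le_top)
  have hsupp : HasCompactSupport (deriv psi) := by
    apply HasCompactSupport.intro (isCompact_Icc (a := (1:ℝ)) (b := 4))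
    intro s hs
    simp only [Set.mem_Icc, not_and_or, not_le] at hs
    rcases hs with h | h
    · exact deriv_psi_of_lt h
    · exact deriv_psi_of_gt h
  obtain ⟨C, hC⟩ := hcont.bounded_above_of_compact_support hsupp
  exact ⟨max C 0, le_max_right _ _, fun s => (Real.norm_eq_abs _ ▸ hC s).trans (le_max_left _ _)⟩


abbrev E2 := EuclideanSpace ℝ (Fin 2)

def phi (R : ℝ) (x : E2) : ℝ := psi (‖x‖ ^ 2 / R ^ 2)

lemma phi_contDiff (R : ℝ) : ContDiff ℝ (⊤ : ℕ∞) (phi R) := by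
  have : phi R = psi ∘ (fun x : E2 => ‖x‖ ^ 2 / R ^ 2) := rfl
  rw [this]
  exact psi_contDiff.comp (contDiff_norm_sq ℝ |>.div_const _)

lemma phi_one {R : ℝ} (hR : 0 < R) {x : E2} (h : ‖x‖ ≤ R) : phi R x = 1 := by
  apply psi_one
  rw [div_le_one (by positivity)]
  exact pow_le_pow_left₀ (norm_nonneg _) h 2

lemma phi_zero {R : ℝ} (hR : 0 < R) {x : E2} (h : 2 * R ≤ ‖x‖) : phi R x = 0 := by
  apply psi_zero
  rw [le_div_iff₀ (by positivity)]
  calc 4 * R ^ 2 = (2 * R) ^ 2 := by ring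
  _ ≤ ‖x‖ ^ 2 := pow_le_pow_left₀ (by positivity) h 2

lemma phi_nonneg (R : ℝ) (x : E2) : 0 ≤ phi R x := psi_nonneg _
lemma phi_le_one (R : ℝ) (x : E2) : phi R x ≤ 1 := psi_le_one _

lemma phi_hasCompactSupport {R : ℝ} (hR : 0 < R) : HasCompactSupport (phi R) := by
  apply HasCompactSupport.intro (isCompact_closedBall (0 : E2) (2 * R))
  intro x hx
  rw [mem_closedBall_zero_iff, not_le] at hx
  exact phi_zero hR hx.le

lemma hasFDerivAt_phi {R : ℝ} (hR : 0 < R) (x : E2) :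
    HasFDerivAt (phi R)
      ((deriv psi (‖x‖ ^ 2 / R ^ 2)) • ((R ^ 2)⁻¹ • (2 • (innerSL ℝ x)))) x := by
  have h1 : HasFDerivAt (fun y : E2 => ‖y‖ ^ 2 / R ^ 2)
      ((R ^ 2)⁻¹ • (2 • (innerSL ℝ x))) x := by
    have h0 := (hasStrictFDerivAt_norm_sq x).hasFDerivAt
    have h2 := h0.const_mul ((R ^ 2)⁻¹)
    have he : (fun y : E2 => ‖y‖ ^ 2 / R ^ 2) = fun y : E2 => (R ^ 2)⁻¹ * ‖y‖ ^ 2 := by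
      funext y; rw [div_eq_inv_mul]
    rw [he]
    exact h2
  have hψ : HasDerivAt psi (deriv psi (‖x‖ ^ 2 / R ^ 2)) (‖x‖ ^ 2 / R ^ 2) :=
    ((psi_contDiff.differentiable (by simp)) _).hasDerivAt
  exact hψ.comp_hasFDerivAt x h1

lemma pd_phi_bound {R K : ℝ} (hR : 0 < R) (hK0 : 0 ≤ K)
    (hK : ∀ s, |deriv psi s| ≤ K) (x : E2) (i : Fin 2) :
    |pd (phi R) x i| ≤ 4 * K / R := by
  rw [pd, (hasFDerivAt_phi hR x).fderiv]
  rcases le_or_gt ‖x‖ (2 * R) with hx | hx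
  · have hs := hK (‖x‖ ^ 2 / R ^ 2)
    have hinner : |(inner ℝ x (EuclideanSpace.single i (1:ℝ)) : ℝ)| ≤ 2 * R := by
      refine (abs_real_inner_le_norm _ _).trans ?_
      rw [EuclideanSpace.norm_single]
      simpa using hx
    simp only [ContinuousLinearMap.coe_smul', Pi.smul_apply, smul_eq_mul,
      ContinuousLinearMap.smul_apply, innerSL_apply_apply, nsmul_eq_mul, Nat.cast_ofNat]
    rw [abs_mul, abs_mul, abs_mul, abs_of_nonneg (by positivity : (0:ℝ) ≤ (R ^ 2)⁻¹), abs_two]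
    calc |deriv psi (‖x‖ ^ 2 / R ^ 2)| * ((R ^ 2)⁻¹ * (2 * |(inner ℝ x (EuclideanSpace.single i (1:ℝ)) : ℝ)|))
        ≤ K * ((R ^ 2)⁻¹ * (2 * (2 * R))) := by
          apply mul_le_mul hs ?_ (by positivity) hK0
          apply mul_le_mul_of_nonneg_left ?_ (by positivity)
          exact mul_le_mul_of_nonneg_left hinner (by norm_num)
    _ = 4 * K / R := by field_simp; ring
  · have : deriv psi (‖x‖ ^ 2 / R ^ 2) = 0 := by
      apply deriv_psi_of_gt
      rw [lt_div_iff₀ (by positivity)]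
      calc (4:ℝ) * R ^ 2 = (2 * R) ^ 2 := by ring
      _ < ‖x‖ ^ 2 := by
        apply pow_lt_pow_left₀ hx (by positivity)
        norm_num
    simp [this]
    positivity

lemma pd_phi_eq_zero_of_lt {R : ℝ} (hR : 0 < R) {x : E2} (h : ‖x‖ < R) (i : Fin 2) :
    pd (phi R) x i = 0 := by
  rw [pd, (hasFDerivAt_phi hR x).fderiv]
  have : deriv psi (‖x‖ ^ 2 / R ^ 2) = 0 := by
    apply deriv_psi_of_lt
    rw [div_lt_one (by positivity)]
    exact pow_lt_pow_left₀ h (norm_nonneg _) (by norm_num)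
  simp [this]

lemma pd_phi_eq_zero_of_gt {R : ℝ} (hR : 0 < R) {x : E2} (h : 2 * R < ‖x‖) (i : Fin 2) :
    pd (phi R) x i = 0 := by
  rw [pd, (hasFDerivAt_phi hR x).fderiv]
  have : deriv psi (‖x‖ ^ 2 / R ^ 2) = 0 := by
    apply deriv_psi_of_gt
    rw [lt_div_iff₀ (by positivity)]
    calc (4:ℝ) * R ^ 2 = (2 * R) ^ 2 := by ring
    _ < ‖x‖ ^ 2 := pow_lt_pow_left₀ h (by positivity) (by norm_num)
  simp [this]


lemma hasCompactSupport_pd {φ : E2 → ℝ} (hs : HasCompactSupport φ) (i : Fin 2) :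
    HasCompactSupport (fun x => pd φ x i) := by
  apply hs.mono'
  intro x hx
  simp only [Function.mem_support, ne_eq] at hx
  by_contra hxt
  exact hx (by rw [pd, fderiv_of_notMem_tsupport (𝕜 := ℝ) hxt]; simp)

lemma ibp {g φ : E2 → ℝ} (hg : ContDiff ℝ (⊤ : ℕ∞) g) (hφ : ContDiff ℝ (⊤ : ℕ∞) φ)
    (hs : HasCompactSupport φ) :
    ∫ x, φ x * lapl g x = - ∫ x, gradDot φ g x := by
  have hpd : ∀ i : Fin 2, HasCompactSupport (fun x => pd φ x i) := hasCompactSupport_pd hs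
  have hint1 : ∀ i : Fin 2, Integrable (fun x => φ x * pd (fun y => pd g y i) x i) volume :=
    fun i => ((hφ.continuous.mul (continuous_pd (contDiff_pd hg i) i)).integrable_of_hasCompactSupport
      (hs.mul_right))
  have hint2 : ∀ i : Fin 2, Integrable (fun x => pd φ x i * pd g x i) volume :=
    fun i => (((continuous_pd hφ i).mul (continuous_pd hg i)).integrable_of_hasCompactSupport
      ((hpd i).mul_right))
  have key : ∀ i : Fin 2, ∫ x, φ x * pd (fun y => pd g y i) x i
      = - ∫ x, pd φ x i * pd g x i := by
    intro i
    have hint3 : Integrable (fun x => φ x * pd g x i) volume :=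
      (hφ.continuous.mul (continuous_pd hg i)).integrable_of_hasCompactSupport (hs.mul_right)
    have h := integral_mul_fderiv_eq_neg_fderiv_mul_of_integrable (μ := volume)
      (f := φ) (g := fun y => pd g y i) (v := EuclideanSpace.single i 1)
      (hint2 i) (hint1 i) hint3 (fun y _ => hφ.differentiable (by simp) y)
      (fun y _ => (contDiff_pd hg i).differentiable (by simp) y)
    exact h
  calc ∫ x, φ x * lapl g x = ∫ x, ∑ i : Fin 2, φ x * pd (fun y => pd g y i) x i := by
        simp only [lapl, Finset.mul_sum]
  _ = ∑ i : Fin 2, ∫ x, φ x * pd (fun y => pd g y i) x i :=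
        integral_finset_sum _ (fun i _ => hint1 i)
  _ = ∑ i : Fin 2, - ∫ x, pd φ x i * pd g x i := Finset.sum_congr rfl (fun i _ => key i)
  _ = - ∑ i : Fin 2, ∫ x, pd φ x i * pd g x i := by rw [← Finset.sum_neg_distrib]
  _ = - ∫ x, gradDot φ g x := by
        rw [← integral_finset_sum _ (fun i _ => hint2 i)]
        simp only [gradDot]

lemma key {g : E2 → ℝ} (hg : ContDiff ℝ (⊤ : ℕ∞) g) (hnn : ∀ x, 0 ≤ lapl g x)
    (hli : Integrable (fun x => lapl g x) volume)
    (hgi : Integrable (fun x => gradDot g g x) volume) :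
    ∀ x, lapl g x = 0 := by
  obtain ⟨K, hK0, hK⟩ := exists_K
  set V := (volume (ball (0:E2) 1)).toReal with hVdef
  have hV0 : 0 ≤ V := ENNReal.toReal_nonneg
  have main : ∀ R : ℝ, 0 < R → ∀ t : ℝ, 0 < t →
      ∫ x in ball (0:E2) R, lapl g x
        ≤ 64 * K ^ 2 * V * t
          + (1 / (2 * t)) * ∫ x in (ball (0:E2) R)ᶜ, gradDot g g x := by
    intro R hR t ht
    have hφc := phi_contDiff R
    have hφs := phi_hasCompactSupport hR
    have hsupp1 : HasCompactSupport (fun x => gradDot (phi R) g x) := by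
      apply HasCompactSupport.intro (isCompact_closedBall (0 : E2) (2 * R))
      intro x hx
      rw [mem_closedBall_zero_iff, not_le] at hx
      simp only [gradDot]
      exact Finset.sum_eq_zero fun i _ => by rw [pd_phi_eq_zero_of_gt hR hx i, zero_mul]
    have hsuppF : HasCompactSupport (fun x => ∑ i : Fin 2, (pd (phi R) x i) ^ 2) := by
      apply HasCompactSupport.intro (isCompact_closedBall (0 : E2) (2 * R))
      intro x hx
      rw [mem_closedBall_zero_iff, not_le] at hx
      exact Finset.sum_eq_zero fun i _ => by rw [pd_phi_eq_zero_of_gt hR hx i]; ring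
    have hcont1 : Continuous (fun x => gradDot (phi R) g x) := continuous_gradDot hφc hg
    have hcontF : Continuous (fun x => ∑ i : Fin 2, (pd (phi R) x i) ^ 2) :=
      continuous_finset_sum _ fun i _ => (continuous_pd hφc i).pow 2
    have hint1 : Integrable (fun x => gradDot (phi R) g x) volume :=
      hcont1.integrable_of_hasCompactSupport hsupp1
    have hintAbs : Integrable (fun x => |gradDot (phi R) g x|) volume := hint1.abs
    have hintF : Integrable (fun x => ∑ i : Fin 2, (pd (phi R) x i) ^ 2) volume :=
      hcontF.integrable_of_hasCompactSupport hsuppF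
    have hintG : Integrable ((ball (0:E2) R)ᶜ.indicator (fun x => gradDot g g x)) volume :=
      hgi.indicator measurableSet_ball.compl
    have hintphilapl : Integrable (fun x => phi R x * lapl g x) volume :=
      (hφc.continuous.mul (continuous_lapl hg)).integrable_of_hasCompactSupport hφs.mul_right
    have h1 : ∫ x in ball (0:E2) R, lapl g x ≤ ∫ x, phi R x * lapl g x := by
      rw [← integral_indicator measurableSet_ball]
      refine integral_mono (hli.indicator measurableSet_ball) hintphilapl fun x => ?_
      by_cases hx : x ∈ ball (0:E2) R
      · rw [Set.indicator_of_mem hx]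
        rw [mem_ball_zero_iff] at hx
        rw [phi_one hR hx.le, one_mul]
      · rw [Set.indicator_of_notMem hx]
        exact mul_nonneg (phi_nonneg R x) (hnn x)
    have h2 : ∫ x, phi R x * lapl g x = - ∫ x, gradDot (phi R) g x := ibp hg hφc hφs
    have h3 : - ∫ x, gradDot (phi R) g x ≤ ∫ x, |gradDot (phi R) g x| := by
      refine (neg_le_abs _).trans ?_
      simpa [Real.norm_eq_abs] using
        norm_integral_le_integral_norm (μ := volume) (fun x => gradDot (phi R) g x)
    have hpt : ∀ x, |gradDot (phi R) g x|
        ≤ (t / 2) * (∑ i : Fin 2, (pd (phi R) x i) ^ 2)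
          + (1 / (2 * t)) * ((ball (0:E2) R)ᶜ.indicator (fun x => gradDot g g x) x) := by
      intro x
      by_cases hx : x ∈ ball (0:E2) R
      · rw [mem_ball_zero_iff] at hx
        have hz : gradDot (phi R) g x = 0 := by
          simp only [gradDot]
          exact Finset.sum_eq_zero fun i _ => by rw [pd_phi_eq_zero_of_lt hR hx i, zero_mul]
        rw [hz, abs_zero]
        have h4 : 0 ≤ (ball (0:E2) R)ᶜ.indicator (fun x => gradDot g g x) x :=
          Set.indicator_nonneg (fun y _ => gradDot_self_nonneg g y) x
        have h5 : 0 ≤ ∑ i : Fin 2, (pd (phi R) x i) ^ 2 :=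
          Finset.sum_nonneg fun i _ => sq_nonneg _
        have h6 : 0 ≤ t / 2 := by linarith
        have h7 : 0 ≤ 1 / (2 * t) := by positivity
        nlinarith
      · rw [Set.indicator_of_mem (Set.mem_compl hx)]
        simp only [gradDot]
        refine (Finset.abs_sum_le_sum_abs _ _).trans ?_
        rw [Finset.mul_sum, Finset.mul_sum, ← Finset.sum_add_distrib]
        refine Finset.sum_le_sum fun i _ => ?_
        rw [abs_mul]
        have hu : (1 / (2 * t)) * (2 * t) = 1 := by field_simp
        nlinarith [sq_nonneg (t * |pd (phi R) x i| - |pd g x i|), sq_abs (pd (phi R) x i),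
          sq_abs (pd g x i), abs_nonneg (pd (phi R) x i), abs_nonneg (pd g x i),
          mul_pos ht ht, one_div_pos.mpr (by linarith : (0:ℝ) < 2 * t)]
    have h4 : ∫ x, |gradDot (phi R) g x|
        ≤ (t / 2) * (∫ x, ∑ i : Fin 2, (pd (phi R) x i) ^ 2)
          + (1 / (2 * t)) * ∫ x, (ball (0:E2) R)ᶜ.indicator (fun x => gradDot g g x) x := by
      rw [← integral_const_mul, ← integral_const_mul,
        ← integral_add (hintF.const_mul _) (hintG.const_mul _)]
      exact integral_mono hintAbs ((hintF.const_mul _).add (hintG.const_mul _)) hpt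
    have h5 : ∫ x, ∑ i : Fin 2, (pd (phi R) x i) ^ 2 ≤ 128 * K ^ 2 * V := by
      have hb : ∀ x, ∑ i : Fin 2, (pd (phi R) x i) ^ 2
          ≤ (closedBall (0:E2) (2*R)).indicator (fun _ => 2 * (4 * K / R) ^ 2) x := by
        intro x
        by_cases hx : x ∈ closedBall (0:E2) (2*R)
        · rw [Set.indicator_of_mem hx]
          have hterm : ∀ i : Fin 2, (pd (phi R) x i) ^ 2 ≤ (4 * K / R) ^ 2 := by
            intro i
            rw [← sq_abs]
            exact pow_le_pow_left₀ (abs_nonneg _) (pd_phi_bound hR hK0 hK x i) 2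
          calc ∑ i : Fin 2, (pd (phi R) x i) ^ 2 ≤ ∑ _i : Fin 2, (4 * K / R) ^ 2 :=
                Finset.sum_le_sum fun i _ => hterm i
          _ = 2 * (4 * K / R) ^ 2 := by
                rw [Fin.sum_univ_two]
                ring
        · rw [Set.indicator_of_notMem hx]
          rw [mem_closedBall_zero_iff, not_le] at hx
          have hz : ∀ i : Fin 2, pd (phi R) x i = 0 := fun i => pd_phi_eq_zero_of_gt hR hx i
          simp [hz]
      have hIndInt : Integrable
          ((closedBall (0:E2) (2*R)).indicator (fun _ : E2 => 2 * (4 * K / R) ^ 2)) volume := by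
        rw [integrable_indicator_iff measurableSet_closedBall]
        exact integrableOn_const measure_closedBall_lt_top.ne
      have hmono := integral_mono hintF hIndInt hb
      rw [integral_indicator_const _ measurableSet_closedBall, smul_eq_mul] at hmono
      refine hmono.trans ?_
      have hvol : (volume (closedBall (0:E2) (2*R))).toReal = (2*R) ^ 2 * V := by
        rw [Measure.addHaar_closedBall (volume : Measure E2) (0:E2) (by positivity : (0:ℝ) ≤ 2*R),
          ENNReal.toReal_mul, ENNReal.toReal_ofReal (by positivity)]
        congr 2
        simp [finrank_euclideanSpace_fin]
      rw [measureReal_def, hvol]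
      have hRne : R ≠ 0 := ne_of_gt hR
      refine le_of_eq ?_
      field_simp
      ring
    calc ∫ x in ball (0:E2) R, lapl g x ≤ ∫ x, phi R x * lapl g x := h1
    _ = - ∫ x, gradDot (phi R) g x := h2
    _ ≤ ∫ x, |gradDot (phi R) g x| := h3
    _ ≤ (t / 2) * (∫ x, ∑ i : Fin 2, (pd (phi R) x i) ^ 2)
          + (1 / (2 * t)) * ∫ x, (ball (0:E2) R)ᶜ.indicator (fun x => gradDot g g x) x := h4
    _ ≤ 64 * K ^ 2 * V * t
          + (1 / (2 * t)) * ∫ x in (ball (0:E2) R)ᶜ, gradDot g g x := by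
        rw [integral_indicator measurableSet_ball.compl]
        have := mul_le_mul_of_nonneg_left h5 (by linarith : (0:ℝ) ≤ t / 2)
        have heq : (t / 2) * (128 * K ^ 2 * V) = 64 * K ^ 2 * V * t := by ring
        linarith
  -- limits
  have hIball : Tendsto (fun n : ℕ => ∫ x in ball (0:E2) n, lapl g x)
      atTop (𝓝 (∫ x, lapl g x)) := by
    have h := tendsto_setIntegral_of_monotone (μ := volume) (f := fun x => lapl g x)
      (s := fun n : ℕ => ball (0:E2) n) (fun _ => measurableSet_ball)
      (fun m n hmn => ball_subset_ball (by exact_mod_cast hmn)) hli.integrableOn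
    rwa [Metric.iUnion_ball_nat, setIntegral_univ] at h
  have hGball : Tendsto (fun n : ℕ => ∫ x in ball (0:E2) n, gradDot g g x)
      atTop (𝓝 (∫ x, gradDot g g x)) := by
    have h := tendsto_setIntegral_of_monotone (μ := volume) (f := fun x => gradDot g g x)
      (s := fun n : ℕ => ball (0:E2) n) (fun _ => measurableSet_ball)
      (fun m n hmn => ball_subset_ball (by exact_mod_cast hmn)) hgi.integrableOn
    rwa [Metric.iUnion_ball_nat, setIntegral_univ] at h
  have hGcompl : Tendsto (fun n : ℕ => ∫ x in (ball (0:E2) n)ᶜ, gradDot g g x)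
      atTop (𝓝 0) := by
    have he : ∀ n : ℕ, ∫ x in (ball (0:E2) n)ᶜ, gradDot g g x
        = (∫ x, gradDot g g x) - ∫ x in ball (0:E2) n, gradDot g g x := by
      intro n
      rw [← integral_add_compl (measurableSet_ball (x := (0:E2)) (ε := (n:ℝ))) hgi]
      ring
    have h := (tendsto_const_nhds (x := ∫ x, gradDot g g x) (f := atTop (α := ℕ))).sub hGball
    rw [sub_self] at h
    simpa [he] using h
  have hfinal : ∀ t : ℝ, 0 < t → ∫ x, lapl g x ≤ 64 * K ^ 2 * V * t := by
    intro t ht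
    have hRHS : Tendsto (fun n : ℕ => 64 * K ^ 2 * V * t
        + (1 / (2 * t)) * ∫ x in (ball (0:E2) n)ᶜ, gradDot g g x) atTop
        (𝓝 (64 * K ^ 2 * V * t)) := by
      have h := (tendsto_const_nhds (x := 64 * K ^ 2 * V * t) (f := atTop (α := ℕ))).add
        (hGcompl.const_mul (1 / (2 * t)))
      simpa using h
    refine le_of_tendsto_of_tendsto' hIball hRHS fun n => ?_
    rcases Nat.eq_zero_or_pos n with rfl | hn
    · have h0 : 0 ≤ ∫ x in (ball (0:E2) ((0:ℕ):ℝ))ᶜ, gradDot g g x :=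
        setIntegral_nonneg measurableSet_ball.compl fun x _ => gradDot_self_nonneg g x
      have hL : ∫ x in ball (0:E2) ((0:ℕ):ℝ), lapl g x = 0 := by
        simp [Metric.ball_zero]
      rw [hL]
      have h6 : 0 ≤ 64 * K ^ 2 * V * t := by positivity
      have h7 : 0 ≤ 1 / (2 * t) := by positivity
      have h8 : 0 ≤ 1 / (2 * t) * ∫ x in (ball (0:E2) ((0:ℕ):ℝ))ᶜ, gradDot g g x :=
        mul_nonneg h7 h0
      linarith
    · exact main n (by exact_mod_cast hn) t ht
  have hI0 : ∫ x, lapl g x ≤ 0 := by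
    by_contra hcon
    push_neg at hcon
    have hC : (0:ℝ) < 64 * K ^ 2 * V + 1 := by positivity
    have ht : 0 < (∫ x, lapl g x) / (2 * (64 * K ^ 2 * V + 1)) := by positivity
    have hle := hfinal _ ht
    have hCnn : (0:ℝ) ≤ 64 * K ^ 2 * V := by positivity
    have hlt : 64 * K ^ 2 * V * ((∫ x, lapl g x) / (2 * (64 * K ^ 2 * V + 1)))
        < ∫ x, lapl g x := by
      rw [mul_div_assoc', div_lt_iff₀ (by positivity)]
      nlinarith [mul_pos hcon hC]
    linarith
  have hge : 0 ≤ ∫ x, lapl g x := integral_nonneg hnn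
  have hIz : ∫ x, lapl g x = 0 := le_antisymm hI0 hge
  have hae : (fun x => lapl g x) =ᵐ[volume] 0 :=
    (integral_eq_zero_iff_of_nonneg hnn hli).mp hIz
  have heq : (fun x => lapl g x) = fun _ => 0 :=
    (Continuous.ae_eq_iff_eq volume (continuous_lapl hg) continuous_const).mp hae
  exact fun x => congrFun heq x

lemma sum_sq_eq_zero {f : E2 → ℝ} (x : E2) (h : gradDot f f x = 0) (i : Fin 2) :
    pd f x i = 0 := by
  have h2 := (Finset.sum_eq_zero_iff_of_nonneg
    (fun j (_ : j ∈ Finset.univ) => mul_self_nonneg (pd f x j))).mp h i (Finset.mem_univ i)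
  exact mul_self_eq_zero.mp h2

lemma fderiv_eq_zero_of_pd {f : E2 → ℝ} (x : E2) (h : ∀ i, pd f x i = 0) :
    fderiv ℝ f x = 0 := by
  have hb : ((fderiv ℝ f x : E2 →L[ℝ] ℝ) : E2 →ₗ[ℝ] ℝ)
      = ((0 : E2 →L[ℝ] ℝ) : E2 →ₗ[ℝ] ℝ) := by
    apply Module.Basis.ext (EuclideanSpace.basisFun (Fin 2) ℝ).toBasis
    intro i
    have hi : ((EuclideanSpace.basisFun (Fin 2) ℝ).toBasis i : E2)
        = EuclideanSpace.single i 1 := by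
      rw [OrthonormalBasis.coe_toBasis]
      exact EuclideanSpace.basisFun_apply _ _ i
    simp only [ContinuousLinearMap.coe_coe, hi]
    simpa [pd] using h i
  exact ContinuousLinearMap.coe_injective hb

end Stmt10Aux

open Stmt10Aux

/-- the only solutions on `ℝ²` of the stationary wave-map system
with target the hyperbolic plane `ℍ²` (`l = 2`), bounded below `u² ≥ c > 0` and
with finite energy `∫ (|∇u¹|² + |∇u²|²)(u²)^{-2} dx < ∞`, are the constants. -/
theorem stmt_10 (u1 u2 : EuclideanSpace ℝ (Fin 2) → ℝ)
    (hu1 : ContDiff ℝ (⊤ : ℕ∞) u1) (hu2 : ContDiff ℝ (⊤ : ℕ∞) u2)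
    (hlb : ∃ c : ℝ, 0 < c ∧ ∀ x, c ≤ u2 x)
    (heq1 : ∀ x, lapl u1 x - (2 / u2 x) * gradDot u1 u2 x = 0)
    (heq2 : ∀ x, lapl u2 x
      + (1 / u2 x) * (gradDot u1 u1 x - gradDot u2 u2 x) = 0)
    (hfin : Integrable
      (fun x => (gradDot u1 u1 x + gradDot u2 u2 x) * ((u2 x) ^ 2)⁻¹) volume) :
    ∃ c₁ c₂ : ℝ, ∀ x, u1 x = c₁ ∧ u2 x = c₂ := by
  obtain ⟨c, hc, hcb⟩ := hlb
  have hu2pos : ∀ x, 0 < u2 x := fun x => lt_of_lt_of_le hc (hcb x)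
  have hne : ∀ x, u2 x ≠ 0 := fun x => ne_of_gt (hu2pos x)
  have hu1' : ContDiff ℝ (⊤ : ℕ∞) u1 := hu1.of_le (by simp)
  have hu2' : ContDiff ℝ (⊤ : ℕ∞) u2 := hu2.of_le (by simp)
  set w := fun y => (u2 y)⁻¹ with hwdef
  have hwc : ContDiff ℝ (⊤ : ℕ∞) w := contDiff_w hu2' hne
  have hlw : ∀ x, lapl w x = (gradDot u1 u1 x + gradDot u2 u2 x) / (u2 x) ^ 3 := by
    intro x
    have h := lapl_w hu2' hne x
    have h2 := heq2 x
    have h3 : lapl u2 x = -(1 / u2 x) * (gradDot u1 u1 x - gradDot u2 u2 x) := by linarith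
    rw [h, h3]
    have := hne x
    field_simp
    ring
  have hnn : ∀ x, 0 ≤ lapl w x := by
    intro x
    rw [hlw x]
    exact div_nonneg (add_nonneg (gradDot_self_nonneg _ x) (gradDot_self_nonneg _ x))
      (pow_nonneg (hu2pos x).le 3)
  have hww : ∀ x, gradDot w w x = (((u2 x) ^ 2)⁻¹) ^ 2 * gradDot u2 u2 x := by
    intro x
    simp only [gradDot, Finset.mul_sum]
    refine Finset.sum_congr rfl fun i _ => ?_
    rw [pd_w hu2' hne x i]
    ring
  have hli : Integrable (fun x => lapl w x) volume := by
    have hb := hfin.const_mul (1 / c)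
    refine Integrable.mono hb (continuous_lapl hwc).aestronglyMeasurable ?_
    filter_upwards with x
    have hE0 : 0 ≤ gradDot u1 u1 x + gradDot u2 u2 x :=
      add_nonneg (gradDot_self_nonneg _ x) (gradDot_self_nonneg _ x)
    rw [Real.norm_eq_abs, Real.norm_eq_abs, hlw x,
      abs_of_nonneg (div_nonneg hE0 (pow_nonneg (hu2pos x).le 3)),
      abs_of_nonneg (mul_nonneg (by positivity) (mul_nonneg hE0 (by positivity)))]
    have h1 : (gradDot u1 u1 x + gradDot u2 u2 x) / (u2 x) ^ 3
        = (gradDot u1 u1 x + gradDot u2 u2 x) * ((u2 x) ^ 2)⁻¹ * (u2 x)⁻¹ := by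
      rw [div_eq_mul_inv, (by ring : (u2 x) ^ 3 = (u2 x) ^ 2 * u2 x), mul_inv, ← mul_assoc]
    have h2 : (u2 x)⁻¹ ≤ 1 / c := by
      rw [one_div]
      exact inv_anti₀ hc (hcb x)
    calc (gradDot u1 u1 x + gradDot u2 u2 x) / (u2 x) ^ 3
        = ((gradDot u1 u1 x + gradDot u2 u2 x) * ((u2 x) ^ 2)⁻¹) * (u2 x)⁻¹ := h1
    _ ≤ ((gradDot u1 u1 x + gradDot u2 u2 x) * ((u2 x) ^ 2)⁻¹) * (1 / c) :=
        mul_le_mul_of_nonneg_left h2 (mul_nonneg hE0 (by positivity))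
    _ = (1 / c) * ((gradDot u1 u1 x + gradDot u2 u2 x) * ((u2 x) ^ 2)⁻¹) := by ring
  have hgi : Integrable (fun x => gradDot w w x) volume := by
    have hb := hfin.const_mul (1 / c ^ 2)
    refine Integrable.mono hb (continuous_gradDot hwc hwc).aestronglyMeasurable ?_
    filter_upwards with x
    have h11 : 0 ≤ gradDot u1 u1 x := gradDot_self_nonneg _ x
    have h22 : 0 ≤ gradDot u2 u2 x := gradDot_self_nonneg _ x
    rw [Real.norm_eq_abs, Real.norm_eq_abs, hww x,
      abs_of_nonneg (mul_nonneg (by positivity) h22),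
      abs_of_nonneg (mul_nonneg (by positivity) (mul_nonneg (by linarith) (by positivity)))]
    have hc2 : ((u2 x) ^ 2)⁻¹ ≤ 1 / c ^ 2 := by
      rw [one_div]
      exact inv_anti₀ (by positivity) (by nlinarith [hcb x, hu2pos x])
    calc (((u2 x) ^ 2)⁻¹) ^ 2 * gradDot u2 u2 x
        = (gradDot u2 u2 x * ((u2 x) ^ 2)⁻¹) * ((u2 x) ^ 2)⁻¹ := by ring
    _ ≤ (gradDot u2 u2 x * ((u2 x) ^ 2)⁻¹) * (1 / c ^ 2) :=
        mul_le_mul_of_nonneg_left hc2 (mul_nonneg h22 (by positivity))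
    _ ≤ ((gradDot u1 u1 x + gradDot u2 u2 x) * ((u2 x) ^ 2)⁻¹) * (1 / c ^ 2) := by
        have : gradDot u2 u2 x * ((u2 x) ^ 2)⁻¹
            ≤ (gradDot u1 u1 x + gradDot u2 u2 x) * ((u2 x) ^ 2)⁻¹ :=
          mul_le_mul_of_nonneg_right (by linarith) (by positivity)
        exact mul_le_mul_of_nonneg_right this (by positivity)
    _ = (1 / c ^ 2) * ((gradDot u1 u1 x + gradDot u2 u2 x) * ((u2 x) ^ 2)⁻¹) := by ring
  have hz := key hwc hnn hli hgi
  have hE : ∀ x, gradDot u1 u1 x + gradDot u2 u2 x = 0 := by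
    intro x
    have h := hz x
    rw [hlw x] at h
    rcases div_eq_zero_iff.mp h with h' | h'
    · exact h'
    · exact absurd h' (pow_ne_zero 3 (hne x))
  have h1z : ∀ x i, pd u1 x i = 0 := by
    intro x i
    refine sum_sq_eq_zero x ?_ i
    have h11 := gradDot_self_nonneg u1 x
    have h22 := gradDot_self_nonneg u2 x
    have := hE x
    linarith
  have h2z : ∀ x i, pd u2 x i = 0 := by
    intro x i
    refine sum_sq_eq_zero x ?_ i
    have h11 := gradDot_self_nonneg u1 x
    have h22 := gradDot_self_nonneg u2 x
    have := hE x
    linarith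
  refine ⟨u1 0, u2 0, fun x => ⟨?_, ?_⟩⟩
  · exact is_const_of_fderiv_eq_zero (hu1'.differentiable (by simp))
      (fun y => fderiv_eq_zero_of_pd y (h1z y)) x 0
  · exact is_const_of_fderiv_eq_zero (hu2'.differentiable (by simp))
      (fun y => fderiv_eq_zero_of_pd y (h2z y)) x 0


end
end

section
/- Let n ∈ ℕ, n ≥ 1, and let R : ℝ → ℝ be a smooth, positive, non-constant, 1-periodic function. Define q(t) = (n/2)R''(t)/R(t) − (n/2)(1 − n/2)(R'(t)/R(t))², for λ ∈ ℝ let W_λ be the solution of y''(t) + (λR(t)^{-2} − q(t))y(t) = 0 with W_λ(0) = 0, W_λ'(0) = 1, let V_λ be the solution with V_λ(0) = 1, V_λ'(0) = 0, and set D(λ) = W_λ'(1) + V_λ(1). Suppose Λ ⊂ (0,∞) is a nonempty open interval with |D(λ)| > 2 for all λ ∈ Λ. Then there exists a nonempty open subset Λ⁰ ⊂ Λ such that W_λ(1) ≠ 0 for all λ ∈ Λ⁰. -/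
open Set intervalIntegral


/-- Energy (Gronwall) bound for a second-order linear ODE. -/
lemma energy_bound (f : ℝ → ℝ) (hf1 : Differentiable ℝ f)
    (hf2 : Differentiable ℝ (deriv f)) (M : ℝ) (hM : 0 ≤ M)
    (heq : ∀ t ∈ Icc (0:ℝ) 1, |deriv (deriv f) t| ≤ M * |f t|)
    (h0 : (f 0)^2 + (deriv f 0)^2 ≤ 1) :
    ∀ t ∈ Icc (0:ℝ) 1, (f t)^2 + (deriv f t)^2 ≤ Real.exp (1 + M) := by
  set K := 1 + M with hK
  have hK0 : 0 < K := by positivity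
  set E : ℝ → ℝ := fun t => (f t)^2 + (deriv f t)^2 with hE
  set G : ℝ → ℝ := fun t => E t * Real.exp (-(K * t)) with hG
  have hEd : ∀ t, HasDerivAt E (2 * f t * deriv f t
      + 2 * deriv f t * deriv (deriv f) t) t := by
    intro t
    have h1 : HasDerivAt (fun s => (f s)^2) (2 * f t * deriv f t) t := by
      exact ((hf1 t).hasDerivAt.pow 2).congr_deriv (by norm_num)
    have h2 : HasDerivAt (fun s => (deriv f s)^2)
        (2 * deriv f t * deriv (deriv f) t) t := by
      exact (((hf2 t).hasDerivAt).pow 2).congr_deriv (by norm_num)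
    exact h1.add h2
  have hGd : ∀ t, HasDerivAt G
      ((2 * f t * deriv f t + 2 * deriv f t * deriv (deriv f) t)
        * Real.exp (-(K * t)) + E t * (Real.exp (-(K * t)) * (-K))) t := by
    intro t
    have he : HasDerivAt (fun s => Real.exp (-(K * s)))
        (Real.exp (-(K * t)) * (-K)) t := by
      have : HasDerivAt (fun s : ℝ => -(K * s)) (-K) t := by
        exact ((hasDerivAt_id t).const_mul K).neg.congr_deriv (by ring)
      exact (Real.hasDerivAt_exp (-(K * t))).comp t this
    exact (hEd t).mul he
  have hant : AntitoneOn G (Icc (0:ℝ) 1) := by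
    apply antitoneOn_of_deriv_nonpos (convex_Icc 0 1)
    · exact (Continuous.continuousOn (by
        have : Continuous E := by
          have := hf1.continuous
          have := hf2.continuous
          fun_prop
        fun_prop))
    · intro t _
      exact ((hGd t).differentiableAt).differentiableWithinAt
    · intro t ht
      rw [interior_Icc] at ht
      rw [(hGd t).deriv]
      have ht' : t ∈ Icc (0:ℝ) 1 := ⟨le_of_lt ht.1, le_of_lt ht.2⟩
      have hb := heq t ht'
      have hexp : 0 < Real.exp (-(K * t)) := Real.exp_pos _
      have key : 2 * f t * deriv f t + 2 * deriv f t * deriv (deriv f) t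
          ≤ K * E t := by
        have h1 : 2 * |f t| * |deriv f t| ≤ (f t)^2 + (deriv f t)^2 := by
          nlinarith [sq_nonneg (|f t| - |deriv f t|), sq_abs (f t), sq_abs (deriv f t)]
        have h2 : 2 * f t * deriv f t ≤ 2 * |f t| * |deriv f t| := by
          have := abs_mul (f t) (deriv f t)
          nlinarith [le_abs_self (f t * deriv f t), abs_nonneg (f t), abs_nonneg (deriv f t),
            abs_mul (f t) (deriv f t)]
        have h3 : 2 * deriv f t * deriv (deriv f) t
            ≤ 2 * M * (|f t| * |deriv f t|) := by
          have hle : deriv f t * deriv (deriv f) t ≤ |deriv f t| * (M * |f t|) := by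
            calc deriv f t * deriv (deriv f) t ≤ |deriv f t * deriv (deriv f) t| :=
                  le_abs_self _
            _ = |deriv f t| * |deriv (deriv f) t| := abs_mul _ _
            _ ≤ |deriv f t| * (M * |f t|) :=
                  mul_le_mul_of_nonneg_left hb (abs_nonneg _)
          nlinarith
        have h4 : 2 * M * (|f t| * |deriv f t|) ≤ M * ((f t)^2 + (deriv f t)^2) := by
          nlinarith [sq_nonneg (|f t| - |deriv f t|), sq_abs (f t), sq_abs (deriv f t)]
        have : K * E t = (1 + M) * ((f t)^2 + (deriv f t)^2) := by rw [hK]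
        nlinarith
      nlinarith [mul_le_mul_of_nonneg_right key (le_of_lt hexp)]
  intro t ht
  have h1 : G t ≤ G 0 := hant (by constructor <;> norm_num) ht ht.1
  have h2 : G 0 = E 0 := by simp [hG]
  have h3 : E 0 ≤ 1 := h0
  have hexp : 0 < Real.exp (-(K * t)) := Real.exp_pos _
  have h4 : E t * Real.exp (-(K * t)) ≤ 1 := by
    calc E t * Real.exp (-(K * t)) = G t := rfl
    _ ≤ G 0 := h1
    _ = E 0 := h2
    _ ≤ 1 := h3
  have h5 : E t ≤ Real.exp (K * t) := by
    have := mul_le_mul_of_nonneg_right h4 (le_of_lt (Real.exp_pos (K * t)))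
    rw [one_mul, mul_assoc, ← Real.exp_add] at this
    simpa using this
  calc E t ≤ Real.exp (K * t) := h5
  _ ≤ Real.exp K := by
      apply Real.exp_le_exp.mpr
      nlinarith [ht.1, ht.2, hK0]


lemma lower_bound (f : ℝ → ℝ) (hf1 : Differentiable ℝ f)
    (hf2 : Differentiable ℝ (deriv f)) (B : ℝ) (hB : 0 ≤ B)
    (hf'' : ∀ t ∈ Icc (0:ℝ) 1, |deriv (deriv f) t| ≤ B)
    (h0 : f 0 = 0) (h0' : deriv f 0 = 1)
    (δ : ℝ) (hδ0 : 0 ≤ δ) (hδ1 : δ ≤ 1) (hδB : B * δ ≤ 1/2) :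
    ∀ t ∈ Icc (0:ℝ) δ, t/2 ≤ f t := by
  have step1 : ∀ s ∈ Icc (0:ℝ) δ, |deriv f s - 1| ≤ B * s := by
    intro s hs
    have hsub : Icc (0:ℝ) s ⊆ Icc (0:ℝ) 1 :=
      Icc_subset_Icc le_rfl (le_trans hs.2 hδ1)
    have := Convex.norm_image_sub_le_of_norm_hasDerivWithin_le
      (f := deriv f) (f' := deriv (deriv f)) (s := Icc (0:ℝ) s) (C := B)
      (fun x _ => ((hf2 x).hasDerivAt).hasDerivWithinAt)
      (fun x hx => by simpa using hf'' x (hsub hx))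
      (convex_Icc 0 s) (left_mem_Icc.mpr hs.1) (right_mem_Icc.mpr hs.1)
    rw [h0'] at this
    simpa [abs_of_nonneg hs.1] using this
  intro t ht
  have step2 : |(f t - t) - (f 0 - 0)| ≤ (1/2) * |t - 0| := by
    apply Convex.norm_image_sub_le_of_norm_hasDerivWithin_le
      (f := fun s => f s - s) (f' := fun s => deriv f s - 1)
      (s := Icc (0:ℝ) t) (C := 1/2)
      (fun x _ => (((hf1 x).hasDerivAt).sub (hasDerivAt_id x)).hasDerivWithinAt)
      (fun x hx => ?_) (convex_Icc 0 t) (left_mem_Icc.mpr ht.1)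
      (right_mem_Icc.mpr ht.1)
    have hx' : x ∈ Icc (0:ℝ) δ := ⟨hx.1, le_trans hx.2 ht.2⟩
    calc ‖deriv f x - 1‖ ≤ B * x := step1 x hx'
    _ ≤ B * δ := mul_le_mul_of_nonneg_left hx'.2 hB
    _ ≤ 1/2 := hδB
  rw [h0] at step2
  have h2 : |f t - t| ≤ t/2 := by
    have h3 : |t - 0| = t := by rw [sub_zero, abs_of_nonneg ht.1]
    rw [h3] at step2
    simpa using (by linarith [step2] : |f t - t - (0 - 0)| ≤ t/2)
  have := abs_le.mp h2
  linarith [this.1]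


lemma orth (ρ q : ℝ → ℝ) (hρc : Continuous ρ) (hqc : Continuous q)
    (lam mu : ℝ) (hne : lam ≠ mu) (f g : ℝ → ℝ)
    (hf1 : Differentiable ℝ f) (hf2 : Differentiable ℝ (deriv f))
    (hg1 : Differentiable ℝ g) (hg2 : Differentiable ℝ (deriv g))
    (hfeq : ∀ t, deriv (deriv f) t = -((lam * ρ t - q t) * f t))
    (hgeq : ∀ t, deriv (deriv g) t = -((mu * ρ t - q t) * g t))
    (hf0 : f 0 = 0) (hg0 : g 0 = 0) (hf1v : f 1 = 0) (hg1v : g 1 = 0) :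
    ∫ t in (0:ℝ)..1, ρ t * (f t * g t) = 0 := by
  set wf : ℝ → ℝ := fun t => f t * deriv g t - deriv f t * g t with hwf
  have hder : ∀ t, HasDerivAt wf ((lam - mu) * (ρ t * (f t * g t))) t := by
    intro t
    have h1 : HasDerivAt (fun s => f s * deriv g s)
        (deriv f t * deriv g t + f t * deriv (deriv g) t) t :=
      ((hf1 t).hasDerivAt.mul (hg2 t).hasDerivAt)
    have h2 : HasDerivAt (fun s => deriv f s * g s)
        (deriv (deriv f) t * g t + deriv f t * deriv g t) t :=
      ((hf2 t).hasDerivAt.mul (hg1 t).hasDerivAt)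
    have := h1.sub h2
    exact this.congr_deriv (by rw [hfeq t, hgeq t]; ring)
  have hint : IntervalIntegrable (fun t => (lam - mu) * (ρ t * (f t * g t)))
      MeasureTheory.volume 0 1 := by
    apply Continuous.intervalIntegrable
    exact continuous_const.mul (hρc.mul (hf1.continuous.mul hg1.continuous))
  have hftc : ∫ t in (0:ℝ)..1, (lam - mu) * (ρ t * (f t * g t)) = wf 1 - wf 0 :=
    integral_eq_sub_of_hasDerivAt (fun t _ => hder t) hint
  have hz : wf 1 - wf 0 = 0 := by simp [hwf, hf0, hg0, hf1v, hg1v]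
  rw [integral_const_mul] at hftc
  have : lam - mu ≠ 0 := sub_ne_zero_of_ne hne
  rw [hz] at hftc
  exact (mul_eq_zero.mp hftc).resolve_left this


set_option maxHeartbeats 1600000 in
/-- on every instability interval `Λ` (where the trace `D(λ)` of
the monodromy matrix of `y'' + (λR^{-2} − q)y = 0` satisfies `|D(λ)| > 2`)
there is a nonempty open subset `Λ⁰` on which the monodromy entry
`b₂₁(λ) = W_λ(1)` does not vanish. -/
theorem stmt_14 (n : ℕ) (hn : 1 ≤ n) (R : ℝ → ℝ)
    (hR : ContDiff ℝ (⊤ : ℕ∞) R) (hRpos : ∀ t, 0 < R t)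
    (hRper : ∀ t, R (t + 1) = R t) (hRnc : ∃ t s, R t ≠ R s)
    (q : ℝ → ℝ)
    (hq : ∀ t, q t = ((n : ℝ) / 2) * (deriv (deriv R) t / R t)
      - ((n : ℝ) / 2) * (1 - (n : ℝ) / 2) * (deriv R t / R t) ^ 2)
    (W V : ℝ → ℝ → ℝ)
    (hWsm : ∀ lam, ContDiff ℝ 2 (W lam)) (hVsm : ∀ lam, ContDiff ℝ 2 (V lam))
    (hWeq : ∀ lam t, iteratedDeriv 2 (W lam) t
      + (lam * ((R t) ^ 2)⁻¹ - q t) * W lam t = 0)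
    (hVeq : ∀ lam t, iteratedDeriv 2 (V lam) t
      + (lam * ((R t) ^ 2)⁻¹ - q t) * V lam t = 0)
    (hW0 : ∀ lam, W lam 0 = 0) (hW0' : ∀ lam, deriv (W lam) 0 = 1)
    (hV0 : ∀ lam, V lam 0 = 1) (hV0' : ∀ lam, deriv (V lam) 0 = 0)
    (D : ℝ → ℝ) (hD : ∀ lam, D lam = deriv (W lam) 1 + V lam 1)
    (Λ : Set ℝ) (hΛopen : IsOpen Λ) (hΛne : Λ.Nonempty)
    (hΛconn : Λ.OrdConnected) (hΛpos : Λ ⊆ Set.Ioi 0)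
    (hinst : ∀ lam ∈ Λ, 2 < |D lam|) :
    ∃ Λ₀ : Set ℝ, Λ₀.Nonempty ∧ IsOpen Λ₀ ∧ Λ₀ ⊆ Λ ∧
      ∀ lam ∈ Λ₀, W lam 1 ≠ 0 := by
  -- basic regularity of R and q
  have hRc : Continuous R := hR.continuous
  have hRne : ∀ t, R t ≠ 0 := fun t => ne_of_gt (hRpos t)
  have hR2 : ContDiff ℝ ((1:ℕ) + 1) R := hR.of_le (WithTop.coe_le_coe.mpr le_top)
  have hR' : ContDiff ℝ 1 (deriv R) := (contDiff_succ_iff_deriv.mp hR2).2.2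
  have hR'c : Continuous (deriv R) := hR'.continuous
  have hR''c : Continuous (deriv (deriv R)) := (contDiff_one_iff_deriv.mp hR').2
  have hqc : Continuous q := by
    have hqe : q = fun t => ((n : ℝ) / 2) * (deriv (deriv R) t / R t)
      - ((n : ℝ) / 2) * (1 - (n : ℝ) / 2) * (deriv R t / R t) ^ 2 := funext hq
    rw [hqe]
    exact ((continuous_const.mul (hR''c.div hRc hRne)).sub
      (continuous_const.mul ((hR'c.div hRc hRne).pow 2)))
  set ρ : ℝ → ℝ := fun t => ((R t)^2)⁻¹ with hρ
  have hρc : Continuous ρ := (hRc.pow 2).inv₀ (fun t => pow_ne_zero 2 (hRne t))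
  have hρpos : ∀ t, 0 < ρ t := fun t => inv_pos.mpr (pow_pos (hRpos t) 2)
  -- regularity of W lam
  have hWd1 : ∀ lam, Differentiable ℝ (W lam) := by
    intro lam
    have h' : ContDiff ℝ ((1:ℕ) + 1) (W lam) := by
      have := hWsm lam; norm_num at this ⊢; exact this
    exact (contDiff_succ_iff_deriv.mp h').1
  have hWd2 : ∀ lam, Differentiable ℝ (deriv (W lam)) := by
    intro lam
    have h' : ContDiff ℝ ((1:ℕ) + 1) (W lam) := by
      have := hWsm lam; norm_num at this ⊢; exact this
    exact ((contDiff_succ_iff_deriv.mp h').2.2).differentiable (by simp)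
  have hW'' : ∀ lam t, deriv (deriv (W lam)) t = -((lam * ρ t - q t) * W lam t) := by
    intro lam t
    have hit : iteratedDeriv 2 (W lam) t = deriv (deriv (W lam)) t := by
      rw [iteratedDeriv_succ, iteratedDeriv_one]
    have := hWeq lam t
    rw [hit] at this
    linarith [this]
  -- choose a compact subinterval [a,b] ⊆ Λ
  obtain ⟨x₀, hx₀⟩ := hΛne
  obtain ⟨ε, hε, hball⟩ := Metric.isOpen_iff.mp hΛopen x₀ hx₀
  have hexists : ∃ a b : ℝ, a < b ∧ Icc a b ⊆ Λ := by
    refine ⟨x₀ - ε/2, x₀ + ε/2, by linarith, ?_⟩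
    intro y hy
    apply hball
    rw [Metric.mem_ball, Real.dist_eq, abs_lt]
    exact ⟨by linarith [hy.1], by linarith [hy.2]⟩
  obtain ⟨a, b, hab, hIccΛ⟩ := hexists
  have ha0 : 0 < a := hΛpos (hIccΛ ⟨le_rfl, le_of_lt hab⟩)
  have hb0 : 0 < b := lt_trans ha0 hab
  -- uniform bounds for the coefficient
  obtain ⟨K₁, hK₁⟩ := isCompact_Icc.exists_bound_of_continuousOn
    (hρc.continuousOn (s := Icc (0:ℝ) 1))
  obtain ⟨K₂, hK₂⟩ := isCompact_Icc.exists_bound_of_continuousOn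
    (hqc.continuousOn (s := Icc (0:ℝ) 1))
  have hK₁0 : 0 ≤ K₁ := le_trans (norm_nonneg _) (hK₁ 0 ⟨le_rfl, zero_le_one⟩)
  have hK₂0 : 0 ≤ K₂ := le_trans (norm_nonneg _) (hK₂ 0 ⟨le_rfl, zero_le_one⟩)
  obtain ⟨t₀, ht₀mem, ht₀⟩ := isCompact_Icc.exists_isMinOn
    (Set.nonempty_Icc.mpr (zero_le_one)) (hρc.continuousOn (s := Icc (0:ℝ) 1))
  set r₀ : ℝ := ρ t₀ with hr₀def
  have hr₀pos : 0 < r₀ := hρpos t₀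
  have hr₀ : ∀ t ∈ Icc (0:ℝ) 1, r₀ ≤ ρ t := fun t ht => ht₀ ht
  set M : ℝ := b * K₁ + K₂ with hM
  have hM0 : 0 ≤ M := by positivity
  have hpb : ∀ lam ∈ Icc a b, ∀ t ∈ Icc (0:ℝ) 1, |lam * ρ t - q t| ≤ M := by
    intro lam hlam t ht
    have h1 : |lam * ρ t| ≤ b * K₁ := by
      rw [abs_mul]
      apply mul_le_mul (by rw [abs_of_pos (lt_of_lt_of_le ha0 hlam.1)]; exact hlam.2)
        (hK₁ t ht) (abs_nonneg _) (le_of_lt hb0)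
    have h2 : |q t| ≤ K₂ := hK₂ t ht
    calc |lam * ρ t - q t| ≤ |lam * ρ t| + |q t| := abs_sub _ _
    _ ≤ b * K₁ + K₂ := add_le_add h1 h2
  -- uniform bound for W and W'
  set C : ℝ := Real.exp (1 + M) with hC
  have hC1 : 1 ≤ C := Real.one_le_exp (by linarith)
  have hC0 : 0 < C := lt_of_lt_of_le one_pos hC1
  have hWbd : ∀ lam ∈ Icc a b, ∀ t ∈ Icc (0:ℝ) 1,
      |W lam t| ≤ C ∧ |deriv (W lam) t| ≤ C := by
    intro lam hlam t ht
    have he := energy_bound (W lam) (hWd1 lam) (hWd2 lam) M hM0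
      (fun s hs => by
        rw [hW'' lam s, abs_neg, abs_mul]
        exact mul_le_mul_of_nonneg_right (hpb lam hlam s hs) (abs_nonneg _))
      (by rw [hW0 lam, hW0' lam]; norm_num) t ht
    constructor
    · nlinarith [sq_abs (W lam t), abs_nonneg (W lam t), sq_nonneg (deriv (W lam) t)]
    · nlinarith [sq_abs (deriv (W lam) t), abs_nonneg (deriv (W lam) t), sq_nonneg (W lam t)]
  set B : ℝ := M * C with hB
  have hB0 : 0 ≤ B := by positivity
  have hW''bd : ∀ lam ∈ Icc a b, ∀ t ∈ Icc (0:ℝ) 1,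
      |deriv (deriv (W lam)) t| ≤ B := by
    intro lam hlam t ht
    rw [hW'' lam t, abs_neg, abs_mul]
    exact mul_le_mul (hpb lam hlam t ht) (hWbd lam hlam t ht).1 (abs_nonneg _) hM0
  set δ : ℝ := min 1 (1/(2*B+1)) with hδ
  have hδ0 : 0 < δ := lt_min one_pos (by positivity)
  have hδ1 : δ ≤ 1 := min_le_left _ _
  have hδB : B * δ ≤ 1/2 := by
    have h1 : δ ≤ 1/(2*B+1) := min_le_right _ _
    have h2 : B * δ ≤ B * (1/(2*B+1)) := mul_le_mul_of_nonneg_left h1 hB0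
    have h3 : B * (1/(2*B+1)) ≤ 1/2 := by
      rw [mul_one_div, div_le_div_iff₀ (by positivity) (by norm_num : (0:ℝ) < 2)]
      linarith
    linarith
  have hWlow : ∀ lam ∈ Icc a b, ∀ t ∈ Icc (0:ℝ) δ, t/2 ≤ W lam t := by
    intro lam hlam
    exact lower_bound (W lam) (hWd1 lam) (hWd2 lam) B hB0
      (hW''bd lam hlam) (hW0 lam) (hW0' lam) δ (le_of_lt hδ0) hδ1 hδB
  -- orthogonality
  have horth : ∀ lam mu : ℝ, lam ≠ mu → W lam 1 = 0 → W mu 1 = 0 →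
      ∫ t in (0:ℝ)..1, ρ t * (W lam t * W mu t) = 0 := by
    intro lam mu hne h1 h2
    exact orth ρ q hρc hqc lam mu hne (W lam) (W mu) (hWd1 lam) (hWd2 lam)
      (hWd1 mu) (hWd2 mu) (hW'' lam) (hW'' mu) (hW0 lam) (hW0 mu) h1 h2
  -- integrability
  have hii : ∀ (lam mu : ℝ) (u v : ℝ), IntervalIntegrable
      (fun t => ρ t * (W lam t * W mu t)) MeasureTheory.volume u v := by
    intro lam mu u v
    exact (hρc.mul ((hWd1 lam).continuous.mul (hWd1 mu).continuous)).intervalIntegrable u v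
  set β : ℝ := r₀ * δ^3 / 12 with hβ
  have hβ0 : 0 < β := by positivity
  set Γ : ℝ := K₁ * C^2 with hΓ
  have hΓ0 : 0 ≤ Γ := by positivity
  -- the key off-diagonal and diagonal bounds
  have hoff : ∀ lam ∈ Icc a b, ∀ mu ∈ Icc a b, lam ≠ mu →
      W lam 1 = 0 → W mu 1 = 0 →
      (∫ t in δ..1, ρ t * (W lam t * W mu t)) ≤ -β := by
    intro lam hlam mu hmu hne h1 h2
    have hsplit : (∫ t in (0:ℝ)..δ, ρ t * (W lam t * W mu t))
        + (∫ t in δ..1, ρ t * (W lam t * W mu t)) = 0 := by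
      rw [integral_add_adjacent_intervals (hii lam mu 0 δ) (hii lam mu δ 1)]
      exact horth lam mu hne h1 h2
    have hlow : β ≤ ∫ t in (0:ℝ)..δ, ρ t * (W lam t * W mu t) := by
      have hmono : (∫ t in (0:ℝ)..δ, r₀/4 * t^2)
          ≤ ∫ t in (0:ℝ)..δ, ρ t * (W lam t * W mu t) := by
        apply integral_mono_on (le_of_lt hδ0)
          ((continuous_const.mul (continuous_pow 2)).intervalIntegrable _ _)
          (hii lam mu 0 δ)
        intro t ht
        have ht1 : t ∈ Icc (0:ℝ) 1 := ⟨ht.1, le_trans ht.2 hδ1⟩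
        have hwl := hWlow lam hlam t ht
        have hwm := hWlow mu hmu t ht
        have hρt := hr₀ t ht1
        have ht0 : 0 ≤ t := ht.1
        have hWW : t/2 * (t/2) ≤ W lam t * W mu t :=
          mul_le_mul hwl hwm (by linarith) (by linarith)
        have h5 : 0 ≤ t/2 * (t/2) := by positivity
        calc r₀/4 * t^2 = r₀ * (t/2 * (t/2)) := by ring
        _ ≤ ρ t * (t/2 * (t/2)) := mul_le_mul_of_nonneg_right hρt h5
        _ ≤ ρ t * (W lam t * W mu t) :=
            mul_le_mul_of_nonneg_left hWW (le_of_lt (hρpos t))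
      have hval : (∫ t in (0:ℝ)..δ, r₀/4 * t^2) = β := by
        rw [intervalIntegral.integral_const_mul, integral_pow]
        rw [hβ]; ring
      linarith
    linarith
  have hdiag : ∀ lam ∈ Icc a b, W lam 1 = 0 →
      (∫ t in δ..1, ρ t * (W lam t * W lam t)) ≤ Γ := by
    intro lam hlam _
    have hmono : (∫ t in δ..1, ρ t * (W lam t * W lam t))
        ≤ ∫ t in δ..1, Γ := by
      apply integral_mono_on hδ1 (hii lam lam δ 1)
        (continuous_const.intervalIntegrable _ _)
      intro t ht
      have ht1 : t ∈ Icc (0:ℝ) 1 := ⟨le_trans (le_of_lt hδ0) ht.1, ht.2⟩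
      have h1 : ρ t ≤ K₁ := le_trans (le_abs_self _) (hK₁ t ht1)
      have h2 := (hWbd lam hlam t ht1).1
      have h3 : W lam t * W lam t ≤ C^2 := by
        have h5 := mul_self_le_mul_self (abs_nonneg (W lam t)) h2
        rw [abs_mul_abs_self] at h5
        nlinarith
      have h4 : 0 ≤ W lam t * W lam t := mul_self_nonneg _
      rw [hΓ]
      calc ρ t * (W lam t * W lam t) ≤ K₁ * (W lam t * W lam t) :=
            mul_le_mul_of_nonneg_right h1 h4
      _ ≤ K₁ * C^2 := mul_le_mul_of_nonneg_left h3 hK₁0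
    have hconst : (∫ _t in δ..1, (Γ:ℝ)) = (1 - δ) * Γ := by
      rw [intervalIntegral.integral_const]; simp [smul_eq_mul]
    rw [hconst] at hmono
    nlinarith [mul_nonneg (le_of_lt hδ0) hΓ0]
  -- finiteness of the Dirichlet zero set in (a,b)
  set Z : Set ℝ := {lam | lam ∈ Ioo a b ∧ W lam 1 = 0} with hZ
  have hZfin : Z.Finite := by
    by_contra hinf
    have hZinf : Z.Infinite := hinf
    set N : ℕ := ⌈Γ/β⌉₊ + 2 with hN
    obtain ⟨T, hTZ, hTfin, hTcard⟩ := hZinf.exists_subset_ncard_eq N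
    set S : Finset ℝ := hTfin.toFinset with hS
    have hScard : S.card = N := by
      rw [hS, ← Set.ncard_eq_toFinset_card T hTfin]
      exact hTcard
    have hSZ : ∀ lam ∈ S, lam ∈ Z := by
      intro lam hlam
      exact hTZ (hTfin.mem_toFinset.mp hlam)
    have hSab : ∀ lam ∈ S, lam ∈ Icc a b := by
      intro lam hlam
      exact Ioo_subset_Icc_self (hSZ lam hlam).1
    have hS0 : ∀ lam ∈ S, W lam 1 = 0 := fun lam hlam => (hSZ lam hlam).2
    -- positivity of the big integral
    have hpos : 0 ≤ ∫ t in δ..1, ρ t * (∑ lam ∈ S, W lam t)^2 := by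
      apply intervalIntegral.integral_nonneg hδ1
      intro u _
      exact mul_nonneg (le_of_lt (hρpos u)) (sq_nonneg _)
    -- expansion into double sum
    have hexp : (∫ t in δ..1, ρ t * (∑ lam ∈ S, W lam t)^2)
        = ∑ lam ∈ S, ∑ mu ∈ S, ∫ t in δ..1, ρ t * (W lam t * W mu t) := by
      have hfe : (fun t => ρ t * (∑ lam ∈ S, W lam t)^2)
          = fun t => ∑ lam ∈ S, ∑ mu ∈ S, ρ t * (W lam t * W mu t) := by
        funext t
        rw [sq, Finset.sum_mul_sum]
        rw [Finset.mul_sum]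
        congr 1
        funext lam
        rw [Finset.mul_sum]
      have hcont : ∀ lam mu : ℝ, Continuous (fun t => ρ t * (W lam t * W mu t)) :=
        fun lam mu => hρc.mul ((hWd1 lam).continuous.mul (hWd1 mu).continuous)
      rw [hfe, integral_finset_sum (fun lam _ =>
        (continuous_finset_sum S (fun mu _ => hcont lam mu)).intervalIntegrable δ 1)]
      exact Finset.sum_congr rfl (fun lam _ =>
        integral_finset_sum (fun mu _ => hii lam mu δ 1))
    -- bound the double sum
    have hsum : (∑ lam ∈ S, ∑ mu ∈ S, ∫ t in δ..1, ρ t * (W lam t * W mu t))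
        ≤ (N:ℝ) * (Γ - ((N:ℝ) - 1) * β) := by
      have hinner : ∀ lam ∈ S,
          (∑ mu ∈ S, ∫ t in δ..1, ρ t * (W lam t * W mu t))
          ≤ Γ - ((N:ℝ) - 1) * β := by
        intro lam hlam
        rw [← Finset.add_sum_erase S
          (fun mu => ∫ t in δ..1, ρ t * (W lam t * W mu t)) hlam]
        have h1 : (∫ t in δ..1, ρ t * (W lam t * W lam t)) ≤ Γ :=
          hdiag lam (hSab lam hlam) (hS0 lam hlam)
        have h2 : (∑ mu ∈ S.erase lam, ∫ t in δ..1, ρ t * (W lam t * W mu t))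
            ≤ ∑ _mu ∈ S.erase lam, (-β) := by
          apply Finset.sum_le_sum
          intro mu hmu
          exact hoff lam (hSab lam hlam) mu (hSab mu (Finset.mem_of_mem_erase hmu))
            (Ne.symm (Finset.ne_of_mem_erase hmu)) (hS0 lam hlam)
            (hS0 mu (Finset.mem_of_mem_erase hmu))
        rw [Finset.sum_const, Finset.card_erase_of_mem hlam, hScard] at h2
        have hcard : ((N - 1 : ℕ) : ℝ) = (N:ℝ) - 1 := by
          have h1N : 1 ≤ N := by rw [hN]; omega
          push_cast [Nat.cast_sub h1N]
          ring
        rw [nsmul_eq_mul, hcard] at h2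
        linarith
      calc (∑ lam ∈ S, ∑ mu ∈ S, ∫ t in δ..1, ρ t * (W lam t * W mu t))
          ≤ ∑ _lam ∈ S, (Γ - ((N:ℝ) - 1) * β) := Finset.sum_le_sum hinner
      _ = (N:ℝ) * (Γ - ((N:ℝ) - 1) * β) := by
          rw [Finset.sum_const, hScard, nsmul_eq_mul]
    have hNbig : Γ - ((N:ℝ) - 1) * β < 0 := by
      have h1 : Γ/β ≤ (⌈Γ/β⌉₊ : ℝ) := Nat.le_ceil _
      have h2 : ((N:ℝ) - 1) = (⌈Γ/β⌉₊ : ℝ) + 1 := by rw [hN]; push_cast; ring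
      have h3 : Γ = (Γ/β) * β := by field_simp
      have h4 : (Γ/β) * β ≤ (⌈Γ/β⌉₊ : ℝ) * β :=
        mul_le_mul_of_nonneg_right h1 (le_of_lt hβ0)
      rw [h2]
      nlinarith
    have hN0 : (0:ℝ) < (N:ℝ) := by
      have : 0 < N := by rw [hN]; omega
      exact_mod_cast this
    rw [hexp] at hpos
    have : (N:ℝ) * (Γ - ((N:ℝ) - 1) * β) < 0 := mul_neg_of_pos_of_neg hN0 hNbig
    linarith
  -- conclusion
  refine ⟨Ioo a b \ Z, ?_, ?_, ?_, ?_⟩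
  · exact ((Set.Ioo_infinite hab).diff hZfin).nonempty
  · exact isOpen_Ioo.sdiff hZfin.isClosed
  · exact fun y hy => hIccΛ (Ioo_subset_Icc_self hy.1)
  · intro lam hlam hzero
    exact hlam.2 ⟨hlam.1, hzero⟩
end
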